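/- arXiv:1606.03122 — 9 statements merged into one kernel-verified Lean document; each statement's English description precedes it below -/
import Mathlib

section
/- Let M be a 𝕂-vector space with a convex modular Θ satisfying the Δ₂ condition, equipped with its Luxemburg norm, and let M ⊕_m 𝕂 carry the modular Θ̄(x,t) = Θ(x) + |t|² and its Luxemburg norm ‖·‖_m. Then (‖(x,1)‖_m − 1) / Θ(x) → 1/2 as x → 0 in M with x ≠ 0; that is, for every ε > 0 there is δ > 0 such that 0 < ‖x‖ < δ implies |(‖(x,1)‖_m − 1)/Θ(x) − 1/2| < ε. -/
noncomputable section

variable (𝕜 : Type*) [RCLike 𝕜]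

/-- The Luxemburg norm associated to a modular `Θ`: `‖x‖ = inf {c > 0 | Θ (x / c) ≤ 1}`. -/
def luxNorm {X : Type*} [AddCommGroup X] [Module 𝕜 X] (Θ : X → ℝ) (x : X) : ℝ :=
  sInf {c : ℝ | 0 < c ∧ Θ ((((c⁻¹ : ℝ) : 𝕜)) • x) ≤ 1}

/-- `Θ` is a convex modular on the `𝕜`-vector space `X`. -/
structure IsConvexModular {X : Type*} [AddCommGroup X] [Module 𝕜 X] (Θ : X → ℝ) : Prop where
  nonneg : ∀ x, 0 ≤ Θ x
  map_zero : Θ 0 = 0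
  convex : ∀ x y : X, ∀ a b : ℝ, 0 ≤ a → 0 ≤ b → a + b = 1 →
    Θ (((a : 𝕜)) • x + ((b : 𝕜)) • y) ≤ a * Θ x + b * Θ y
  symm : ∀ (c : 𝕜) (x : X), ‖c‖ = 1 → Θ (c • x) = Θ x
  faithful : ∀ x, Θ x = 0 → x = 0

/-- The `Δ₂` condition for a modular: `Θ (2 x) ≤ C Θ (x)` for some constant `C`. -/
def SatisfiesDelta2 {X : Type*} [AddCommGroup X] [Module 𝕜 X] (Θ : X → ℝ) : Prop :=
  ∃ C : ℝ, ∀ x, Θ (((2 : 𝕜)) • x) ≤ C * Θ x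


private lemma stmt5_aux_c1 (T : ℝ) (hT0 : 0 < T) :
    T * (1 + T/2 + T^2/8) + 1 ≤ (1 + T/2 + T^2/8)^2 := by
  nlinarith [sq_nonneg (T^2), sq_nonneg T, hT0.le]

private lemma stmt5_aux_ge_one (a v t : ℝ) (ha0 : 0 < a) (ha1 : a < 1) (hav : a * v = 1)
    (ht : 0 ≤ t) (hle : t + v^2 ≤ 1) : False := by
  have hv0 : 0 < v := by nlinarith
  have h1 : 1 < v := by nlinarith [mul_pos hv0 (sub_pos.2 ha1)]
  nlinarith [mul_pos (sub_pos.2 h1) (show (0:ℝ) < v + 1 by linarith)]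

set_option maxHeartbeats 1000000 in

/-- Let `M` be a `𝕂`-vector space (`𝕂 = ℝ` or `ℂ`) with a convex modular `Θ` satisfying the
`Δ₂` condition, equipped with its Luxemburg norm, and let `M ⊕_m 𝕂` carry the modular
`Θ̄(x,t) = Θ(x) + |t|²` and its Luxemburg norm `‖·‖_m`.  Then
`(‖(x,1)‖_m − 1) / Θ(x) → 1/2` as `x → 0` in `M`, `x ≠ 0` (where convergence of `x` to `0` is
in the Luxemburg norm of `Θ`). -/
theorem stmt5 (M : Type*) [AddCommGroup M] [Module 𝕜 M]
    (Θ : M → ℝ) (hmod : IsConvexModular 𝕜 Θ) (hΔ : SatisfiesDelta2 𝕜 Θ) :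
    ∀ ε > (0 : ℝ), ∃ δ > (0 : ℝ), ∀ x : M, 0 < luxNorm 𝕜 Θ x → luxNorm 𝕜 Θ x < δ →
      |(luxNorm 𝕜 (fun q : M × 𝕜 => Θ q.1 + ‖q.2‖ ^ 2) (x, 1) - 1) / Θ x - 1 / 2| < ε := by
  classical
  intro ε hε
  obtain ⟨C₀, hC₀⟩ := hΔ
  set C : ℝ := max C₀ 2 with hCdef
  have hC2 : (2:ℝ) ≤ C := le_max_right _ _
  have hΔ2 : ∀ y : M, Θ ((2:𝕜) • y) ≤ C * Θ y := by
    intro y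
    exact (hC₀ y).trans (mul_le_mul_of_nonneg_right (le_max_left _ _) (hmod.nonneg y))
  clear_value C
  have hCpos : (0:ℝ) < C := by linarith
  set δ : ℝ := min (1/2 : ℝ) (ε / (8 * C)) with hδdef
  have hδpos : 0 < δ := lt_min (by norm_num) (by positivity)
  have hδhalf : δ ≤ 1/2 := min_le_left _ _
  have hδC : δ ≤ ε / (8 * C) := min_le_right _ _
  clear_value δ
  refine ⟨δ, hδpos, ?_⟩
  intro x hx0 hxδ
  -- scaling lemma
  have hsc : ∀ (t : ℝ) (y : M), 0 ≤ t → t ≤ 1 → Θ ((t : 𝕜) • y) ≤ t * Θ y := by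
    intro t y ht ht1
    have h := hmod.convex y 0 t (1 - t) ht (by linarith) (by ring)
    simpa [hmod.map_zero] using h
  -- Θ x is small
  have hSxne : {c : ℝ | 0 < c ∧ Θ ((((c⁻¹ : ℝ) : 𝕜)) • x) ≤ 1}.Nonempty := by
    by_contra h
    rw [Set.not_nonempty_iff_eq_empty] at h
    have : luxNorm 𝕜 Θ x = 0 := by rw [luxNorm, h, Real.sInf_empty]
    rw [this] at hx0
    exact lt_irrefl _ hx0
  obtain ⟨s, hsS, hsδ⟩ := exists_lt_of_csInf_lt hSxne (show sInf _ < δ from hxδ)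
  have hs0 : 0 < s := hsS.1
  have hs1 : s ≤ 1 := by linarith
  have hxs : ((s:ℝ) : 𝕜) • (((s⁻¹:ℝ) : 𝕜)) • x = x := by
    rw [smul_smul, show ((s:ℝ):𝕜) * ((s⁻¹:ℝ):𝕜) = (((s * s⁻¹ : ℝ)):𝕜) by push_cast; ring,
      mul_inv_cancel₀ (ne_of_gt hs0)]
    simp
  have hTδ : Θ x < δ := by
    have h1 := hsc s ((((s⁻¹:ℝ)):𝕜) • x) hs0.le hs1
    rw [hxs] at h1
    have h2 : s * Θ ((((s⁻¹:ℝ)):𝕜) • x) ≤ s * 1 :=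
      mul_le_mul_of_nonneg_left hsS.2 hs0.le
    calc Θ x ≤ s * Θ ((((s⁻¹:ℝ)):𝕜) • x) := h1
      _ ≤ s * 1 := h2
      _ < δ := by rw [mul_one]; exact hsδ
  have hxne : x ≠ 0 := by
    rintro rfl
    have hset : {c : ℝ | 0 < c ∧ Θ ((((c⁻¹ : ℝ) : 𝕜)) • (0:M)) ≤ 1} = Set.Ioi 0 := by
      ext a
      simp [hmod.map_zero]
    have : luxNorm 𝕜 Θ (0:M) = 0 := by rw [luxNorm, hset, csInf_Ioi]
    rw [this] at hx0
    exact lt_irrefl _ hx0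
  set T := Θ x with hTdef
  have hT0 : 0 < T := by
    rcases lt_or_eq_of_le (hmod.nonneg x) with h | h
    · exact h
    · exact absurd (hmod.faithful x h.symm) hxne
  have hT12 : T < 1/2 := lt_of_lt_of_le hTδ hδhalf
  have hCT : C * T < ε/8 := by
    have h1 : T < ε / (8*C) := lt_of_lt_of_le hTδ hδC
    calc C * T < C * (ε / (8*C)) := mul_lt_mul_of_pos_left h1 hCpos
      _ = ε/8 := by field_simp
  have h2T : 2 * T ≤ C * T := mul_le_mul_of_nonneg_right hC2 hT0.le
  have hT16 : T < ε/16 := by linarith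
  -- the product set
  set Sp : Set ℝ := {c : ℝ | 0 < c ∧ Θ ((((c⁻¹:ℝ)):𝕜) • x) + (c⁻¹)^2 ≤ 1} with hSpdef
  have hSpeq : luxNorm 𝕜 (fun q : M × 𝕜 => Θ q.1 + ‖q.2‖ ^ 2) (x, 1) = sInf Sp := by
    rw [luxNorm]
    congr 1
    ext a
    have h : ‖((a⁻¹:ℝ):𝕜)‖^2 = (a⁻¹)^2 := by rw [RCLike.norm_ofReal, sq_abs]
    simp only [hSpdef, Set.mem_setOf_eq, Prod.smul_def, smul_eq_mul, mul_one, h]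
  -- membership of c₁ = 1 + T/2 + T²/8
  obtain ⟨c₁, hc₁def⟩ : ∃ r : ℝ, r = 1 + T/2 + T^2/8 := ⟨_, rfl⟩
  have hTsq : (0:ℝ) ≤ T^2 := sq_nonneg T
  have hc₁pos : 0 < c₁ := by rw [hc₁def]; linarith
  have hc₁1 : 1 ≤ c₁ := by rw [hc₁def]; linarith
  have hc₁mem : c₁ ∈ Sp := by
    refine ⟨hc₁pos, ?_⟩
    have hinv0 : 0 < c₁⁻¹ := inv_pos.mpr hc₁pos
    have hinv1 : c₁⁻¹ ≤ 1 := by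
      rw [inv_le_one_iff₀]; right; exact hc₁1
    have h1 : Θ ((((c₁⁻¹:ℝ)):𝕜) • x) ≤ c₁⁻¹ * T := hsc c₁⁻¹ x hinv0.le hinv1
    have key : T * c₁ + 1 ≤ c₁^2 := by rw [hc₁def]; exact stmt5_aux_c1 T hT0
    have heq : (c₁⁻¹ * T + (c₁⁻¹)^2) * c₁^2 = T * c₁ + 1 := by
      field_simp
    have hsq : (0:ℝ) < c₁^2 := by positivity
    have h3 : c₁⁻¹ * T + (c₁⁻¹)^2 ≤ 1 := by
      have h4 : (c₁⁻¹ * T + (c₁⁻¹)^2) * c₁^2 ≤ 1 * c₁^2 := by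
        rw [heq, one_mul]; exact key
      exact le_of_mul_le_mul_right h4 hsq
    linarith
  -- all elements of Sp are ≥ 1
  have hSp_lb : ∀ a ∈ Sp, (1:ℝ) ≤ a := by
    rintro a ⟨ha0, hale⟩
    by_contra h
    push_neg at h
    exact stmt5_aux_ge_one a a⁻¹ _ ha0 h (mul_inv_cancel₀ (ne_of_gt ha0))
      (hmod.nonneg ((((a⁻¹:ℝ)):𝕜) • x)) hale
  have hSpbdd : BddBelow Sp := ⟨1, fun a ha => hSp_lb a ha⟩
  have hSpne : Sp.Nonempty := ⟨c₁, hc₁mem⟩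
  obtain ⟨c, hcdef⟩ : ∃ r : ℝ, r = sInf Sp := ⟨_, rfl⟩
  have hc1 : 1 ≤ c := hcdef ▸ le_csInf hSpne hSp_lb
  have hcle : c ≤ c₁ := hcdef ▸ csInf_le hSpbdd hc₁mem
  -- pick a near-optimal c'
  obtain ⟨m, hmdef⟩ : ∃ r : ℝ, r = min ε 1 := ⟨_, rfl⟩
  have hm0 : 0 < m := hmdef ▸ lt_min hε one_pos
  have hm1 : m ≤ 1 := hmdef ▸ min_le_right _ _
  have hmε : m ≤ ε := hmdef ▸ min_le_left _ _
  obtain ⟨θ, hθdef⟩ : ∃ r : ℝ, r = T * m / 4 := ⟨_, rfl⟩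
  have hθ0 : 0 < θ := by rw [hθdef]; positivity
  have hθT : θ ≤ T/4 := by
    have h := mul_le_mul_of_nonneg_left hm1 hT0.le
    rw [hθdef]; linarith
  have hθε : θ ≤ ε * T / 4 := by
    have h := mul_le_mul_of_nonneg_left hmε hT0.le
    rw [hθdef]; linarith
  obtain ⟨c', hc'S, hc'lt⟩ := exists_lt_of_csInf_lt hSpne (show sInf Sp < c + θ by
    rw [← hcdef]; linarith)
  have hc'1 : 1 ≤ c' := hSp_lb c' hc'S
  have hc'0 : 0 < c' := by linarith
  have hu' : c' - 1 ≤ T := by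
    have h := mul_lt_mul_of_pos_left hT12 hT0
    have hTT : T^2 < T/2 := by rw [sq]; linarith
    rw [hc₁def] at hcle
    linarith
  have hc'2 : c' < 2 := by linarith
  -- convexity decomposition
  obtain ⟨y, hydef⟩ : ∃ z : M, z = (((c'⁻¹:ℝ)):𝕜) • x := ⟨_, rfl⟩
  have hcomb : ((2 - c' : ℝ) : 𝕜) • y + ((c' - 1 : ℝ) : 𝕜) • ((2:𝕜) • y) = x := by
    rw [hydef]
    simp only [smul_smul]
    rw [← add_smul]
    have hs : ((2 - c' : ℝ) : 𝕜) * ((c'⁻¹:ℝ) : 𝕜) + ((c' - 1 : ℝ) : 𝕜) * (2 * ((c'⁻¹:ℝ) : 𝕜)) = 1 := by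
      have hne : ((c' : ℝ) : 𝕜) ≠ 0 := by
        rw [ne_eq, RCLike.ofReal_eq_zero]
        exact ne_of_gt hc'0
      push_cast
      field_simp
      ring
    rw [hs, one_smul]
  have hconv := hmod.convex y ((2:𝕜) • y) (2 - c') (c' - 1) (by linarith) (by linarith) (by ring)
  rw [hcomb] at hconv
  have hΔy := hΔ2 y
  have hy0 : 0 ≤ Θ y := hmod.nonneg y
  have hu'0 : (0:ℝ) ≤ c' - 1 := by linarith
  have hkey : T ≤ (1 + (C-1)*(c'-1)) * Θ y := by
    have p := mul_le_mul_of_nonneg_left hΔy hu'0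
    have he : (2-c') * Θ y + (c'-1) * (C * Θ y) = (1 + (C-1)*(c'-1)) * Θ y := by ring
    linarith
  have hmemy : Θ y + (c'⁻¹)^2 ≤ 1 := by
    rw [hydef]
    exact hc'S.2
  have hinvc' : c' * c'⁻¹ = 1 := mul_inv_cancel₀ (ne_of_gt hc'0)
  have hΘy : Θ y ≤ (c'-1)^2 + 2*(c'-1) := by
    have hs := sq_nonneg (c'⁻¹ - c')
    linarith [hmemy, hinvc', hs]
  have hfactor : (0:ℝ) ≤ 1 + (C-1)*(c'-1) := by
    have := mul_nonneg (show (0:ℝ) ≤ C-1 by linarith) hu'0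
    linarith
  have hT2 : T ≤ (1 + (C-1)*(c'-1)) * ((c'-1)^2 + 2*(c'-1)) :=
    hkey.trans (mul_le_mul_of_nonneg_left hΘy hfactor)
  -- cubic bounds
  have e1 : (c'-1)*(c'-1) ≤ T*T := mul_le_mul hu' hu' hu'0 hT0.le
  have e2 : (c'-1)*(c'-1)*(c'-1) ≤ T*T*T :=
    mul_le_mul e1 hu' hu'0 (by positivity)
  have hC1 : (0:ℝ) ≤ C - 1 := by linarith
  have hbound : T ≤ 2*(c'-1) + T*T + 2*((C-1)*(T*T)) + (C-1)*(T*T*T) := by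
    have hexp : (1 + (C-1)*(c'-1)) * ((c'-1)^2 + 2*(c'-1)) =
        2*(c'-1) + (c'-1)*(c'-1) + 2*((C-1)*((c'-1)*(c'-1))) + (C-1)*((c'-1)*(c'-1)*(c'-1)) := by
      ring
    rw [hexp] at hT2
    have p1 : (C-1)*((c'-1)*(c'-1)) ≤ (C-1)*(T*T) := mul_le_mul_of_nonneg_left e1 hC1
    have p2 : (C-1)*((c'-1)*(c'-1)*(c'-1)) ≤ (C-1)*(T*T*T) := mul_le_mul_of_nonneg_left e2 hC1
    linarith
  -- translate T*T terms into ε bounds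
  have tTT : (0:ℝ) ≤ T*T := by positivity
  have tTTT : (0:ℝ) ≤ T*T*T := by positivity
  have r1 : C*T*T < (ε/8)*T := mul_lt_mul_of_pos_right hCT hT0
  have r2 : T*T ≤ (C*T*T)/2 := by
    have h := mul_nonneg (sub_nonneg.2 hC2) tTT
    have he : (C-2)*(T*T) = C*T*T - 2*(T*T) := by ring
    linarith
  have r3 : C*T*T*T < ((ε/8)*T)*T := mul_lt_mul_of_pos_right r1 hT0
  have r4 : ε*(T*T) ≤ ε*(T*(1/2)) :=
    mul_le_mul_of_nonneg_left (mul_le_mul_of_nonneg_left hT12.le hT0.le) hε.le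
  have hεT : 0 < ε * T := mul_pos hε hT0
  have hCT1 : (C-1)*(T*T) ≤ C*T*T := by
    have he : (C-1)*(T*T) = C*T*T - T*T := by ring
    linarith
  have hCT2 : (C-1)*(T*T*T) ≤ C*T*T*T := by
    have he : (C-1)*(T*T*T) = C*T*T*T - T*T*T := by ring
    linarith
  have hr3' : ((ε/8)*T)*T = (ε*(T*T))/8 := by ring
  have hr4' : ε*(T*(1/2)) = (ε*T)/2 := by ring
  have hlow : (1/2 - ε) * T < c - 1 := by
    rw [hr3'] at r3
    rw [hr4'] at r4
    linarith
  have hhigh : c - 1 < (1/2 + ε) * T := by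
    rw [hc₁def] at hcle
    have hTT2 : T^2 = T*T := sq T
    linarith
  have hupper : (c - 1)/T < 1/2 + ε := by rw [div_lt_iff₀ hT0]; linarith [hhigh]
  have hlower : 1/2 - ε < (c - 1)/T := by rw [lt_div_iff₀ hT0]; linarith [hlow]
  rw [hSpeq, ← hcdef, abs_lt]
  exact ⟨by linarith, by linarith⟩

end
end

section
/- Let (E₁,Θ₁), (F₁,Φ₁), (E₂,Θ₂), (F₂,Φ₂) be 𝕂-vector spaces each equipped with a convex modular satisfying the Δ₂ condition and with the corresponding Luxemburg norm, and form the modular direct sums E₁ ⊕_m F₁ and E₂ ⊕_m F₂ (with modulars Θ₁+Φ₁ and Θ₂+Φ₂ and their Luxemburg norms). Let T : E₁ ⊕_m F₁ → E₂ ⊕_m F₂ be a linear isometric embedding such that T(E₁ × {0}) = E₂ × {0}. Then T({0} × F₁) ⊆ {0} × F₂. -/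
noncomputable section

variable (𝕜 : Type*) [RCLike 𝕜]

section helpers

variable {𝕜} {X : Type*} [AddCommGroup X] [Module 𝕜 X]

/-- Scaling by `s ∈ [0,1]` scales a convex modular down. -/
lemma modular_scale {Θ : X → ℝ} (h : IsConvexModular 𝕜 Θ) (s : ℝ) (x : X)
    (h0 : 0 ≤ s) (h1 : s ≤ 1) : Θ (((s : 𝕜)) • x) ≤ s * Θ x := by
  have := h.convex x 0 s (1 - s) h0 (by linarith) (by ring)
  simpa [h.map_zero] using this

/-- The defining set of the Luxemburg norm is nonempty, given the scaling property
and nonnegativity. -/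
lemma luxSet_nonempty {Ψ : X → ℝ}
    (hsc : ∀ (s : ℝ) (x : X), 0 ≤ s → s ≤ 1 → Ψ (((s : 𝕜)) • x) ≤ s * Ψ x)
    (hnn : ∀ x, 0 ≤ Ψ x) (v : X) :
    {c : ℝ | 0 < c ∧ Ψ ((((c⁻¹ : ℝ) : 𝕜)) • v) ≤ 1}.Nonempty := by
  set c : ℝ := max 1 (Ψ v) with hc
  have hc1 : (1 : ℝ) ≤ c := le_max_left _ _
  have hcpos : 0 < c := lt_of_lt_of_le one_pos hc1
  refine ⟨c, hcpos, ?_⟩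
  have hinv0 : 0 ≤ c⁻¹ := inv_nonneg.mpr hcpos.le
  have hinv1 : c⁻¹ ≤ 1 := inv_le_one_of_one_le₀ hc1
  calc Ψ ((((c⁻¹ : ℝ) : 𝕜)) • v) ≤ c⁻¹ * Ψ v := hsc c⁻¹ v hinv0 hinv1
    _ ≤ c⁻¹ * c := by
        apply mul_le_mul_of_nonneg_left (le_max_right _ _) hinv0
    _ = 1 := inv_mul_cancel₀ hcpos.ne'

end helpers

/-- Let `(E₁,Θ₁), (F₁,Φ₁), (E₂,Θ₂), (F₂,Φ₂)` be `𝕂`-vector spaces (`𝕂 = ℝ` or `ℂ`), each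
with a convex modular satisfying `Δ₂`, and form the modular direct sums `E₁ ⊕_m F₁` and
`E₂ ⊕_m F₂` (with modulars `Θ₁+Φ₁`, `Θ₂+Φ₂` and the corresponding Luxemburg norms).  If
`T : E₁ ⊕_m F₁ → E₂ ⊕_m F₂` is a linear isometric embedding with `T(E₁ × {0}) = E₂ × {0}`,
then `T({0} × F₁) ⊆ {0} × F₂`. -/
theorem stmt8 (E₁ F₁ E₂ F₂ : Type*)
    [AddCommGroup E₁] [Module 𝕜 E₁] [AddCommGroup F₁] [Module 𝕜 F₁]
    [AddCommGroup E₂] [Module 𝕜 E₂] [AddCommGroup F₂] [Module 𝕜 F₂]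
    (Θ₁ : E₁ → ℝ) (Φ₁ : F₁ → ℝ) (Θ₂ : E₂ → ℝ) (Φ₂ : F₂ → ℝ)
    (hΘ₁ : IsConvexModular 𝕜 Θ₁) (hΦ₁ : IsConvexModular 𝕜 Φ₁)
    (hΘ₂ : IsConvexModular 𝕜 Θ₂) (hΦ₂ : IsConvexModular 𝕜 Φ₂)
    (hΘ₁Δ : SatisfiesDelta2 𝕜 Θ₁) (hΦ₁Δ : SatisfiesDelta2 𝕜 Φ₁)
    (hΘ₂Δ : SatisfiesDelta2 𝕜 Θ₂) (hΦ₂Δ : SatisfiesDelta2 𝕜 Φ₂)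
    (T : E₁ × F₁ →ₗ[𝕜] E₂ × F₂) (hTinj : Function.Injective T)
    (hTiso : ∀ v : E₁ × F₁,
      luxNorm 𝕜 (fun w : E₂ × F₂ => Θ₂ w.1 + Φ₂ w.2) (T v) =
        luxNorm 𝕜 (fun v : E₁ × F₁ => Θ₁ v.1 + Φ₁ v.2) v)
    (hTE : (∀ x : E₁, ∃ x' : E₂, T (x, 0) = (x', 0)) ∧
           (∀ x' : E₂, ∃ x : E₁, T (x, 0) = (x', 0))) :
    ∀ y : F₁, (T (0, y)).1 = 0 := by
  intro y
  by_contra ha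
  set a : E₂ := (T (0, y)).1 with ha_def
  set b : F₂ := (T (0, y)).2 with hb_def
  have hTy : T (0, y) = (a, b) := rfl
  -- Θ₂ a > 0
  have hθ : 0 < Θ₂ a :=
    lt_of_le_of_ne (hΘ₂.nonneg a) (fun h => ha (hΘ₂.faithful a h.symm))
  set Ψ₁ : E₁ × F₁ → ℝ := fun v => Θ₁ v.1 + Φ₁ v.2 with hΨ₁
  set Ψ₂ : E₂ × F₂ → ℝ := fun w => Θ₂ w.1 + Φ₂ w.2 with hΨ₂
  set N₁ : E₁ × F₁ → ℝ := luxNorm 𝕜 Ψ₁ with hN₁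
  set N₂ : E₂ × F₂ → ℝ := luxNorm 𝕜 Ψ₂ with hN₂
  -- negation invariance of the modulars
  have hΦ₁neg : ∀ z : F₁, Φ₁ (-z) = Φ₁ z := by
    intro z
    have := hΦ₁.symm (-1) z (by simp)
    simpa using this
  have hΦ₂neg : ∀ z : F₂, Φ₂ (-z) = Φ₂ z := by
    intro z
    have := hΦ₂.symm (-1) z (by simp)
    simpa using this
  -- reflection symmetry of the Luxemburg norms in the second coordinate
  have hsymm₁ : ∀ (x : E₁) (z : F₁), N₁ (x, z) = N₁ (x, -z) := by
    intro x z
    rw [hN₁]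
    unfold luxNorm
    congr 1
    ext c
    simp only [Set.mem_setOf_eq, Prod.smul_mk, hΨ₁, smul_neg, hΦ₁neg]
  have hsymm₂ : ∀ (x : E₂) (z : F₂), N₂ (x, z) = N₂ (x, -z) := by
    intro x z
    rw [hN₂]
    unfold luxNorm
    congr 1
    ext c
    simp only [Set.mem_setOf_eq, Prod.smul_mk, hΨ₂, smul_neg, hΦ₂neg]
  -- key reflection identity in the target space
  have hrefl : ∀ e : E₂, N₂ (e + a, b) = N₂ (e - a, b) := by
    intro e
    obtain ⟨x, hx⟩ := hTE.2 e
    have h1 : T (x, y) = (e + a, b) := by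
      have hxy : (x, y) = (x, (0 : F₁)) + ((0 : E₁), y) := by simp
      rw [hxy, map_add, hx, hTy]
      simp
    have h2 : T (x, -y) = (e - a, -b) := by
      have hxy : (x, -y) = (x, (0 : F₁)) - ((0 : E₁), y) := by simp [Prod.ext_iff]
      rw [hxy, map_sub, hx, hTy]
      simp [Prod.ext_iff]
    calc N₂ (e + a, b) = N₂ (T (x, y)) := by rw [h1]
      _ = N₁ (x, y) := hTiso (x, y)
      _ = N₁ (x, -y) := hsymm₁ x y
      _ = N₂ (T (x, -y)) := (hTiso (x, -y)).symm
      _ = N₂ (e - a, -b) := by rw [h2]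
      _ = N₂ (e - a, b) := by rw [← hsymm₂]
  -- hence `N₂ (2n • a, b)` is constant in `n`
  have hconst : ∀ n : ℕ, N₂ ((((2 * n : ℕ) : 𝕜)) • a, b) = N₂ (0, b) := by
    intro n
    induction n with
    | zero => norm_num
    | succ n ih =>
      have := hrefl ((((2 * n + 1 : ℕ) : 𝕜)) • a)
      have e1 : (((2 * n + 1 : ℕ) : 𝕜)) • a + a = (((2 * (n + 1) : ℕ) : 𝕜)) • a := by
        push_cast
        module
      have e2 : (((2 * n + 1 : ℕ) : 𝕜)) • a - a = (((2 * n : ℕ) : 𝕜)) • a := by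
        push_cast
        module
      rw [e1, e2] at this
      rw [this, ih]
  -- scaling property and nonnegativity for the pair modular Ψ₂
  have hsc₂ : ∀ (s : ℝ) (w : E₂ × F₂), 0 ≤ s → s ≤ 1 → Ψ₂ (((s : 𝕜)) • w) ≤ s * Ψ₂ w := by
    intro s w h0 h1
    have t1 := modular_scale hΘ₂ s w.1 h0 h1
    have t2 := modular_scale hΦ₂ s w.2 h0 h1
    simp only [hΨ₂, Prod.smul_fst, Prod.smul_snd]
    calc Θ₂ (((s : 𝕜)) • w.1) + Φ₂ (((s : 𝕜)) • w.2) ≤ s * Θ₂ w.1 + s * Φ₂ w.2 :=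
          add_le_add t1 t2
      _ = s * (Θ₂ w.1 + Φ₂ w.2) := by ring
  have hnn₂ : ∀ w : E₂ × F₂, 0 ≤ Ψ₂ w := fun w => add_nonneg (hΘ₂.nonneg _) (hΦ₂.nonneg _)
  -- lower bound: N₂ (s • a, b) ≥ s * min 1 (Θ₂ a) for s ≥ 0
  set δ : ℝ := min 1 (Θ₂ a) with hδ
  have hδpos : 0 < δ := lt_min one_pos hθ
  have hδle1 : δ ≤ 1 := min_le_left _ _
  have hlow : ∀ s : ℝ, 0 ≤ s → s * δ ≤ N₂ (((s : 𝕜)) • a, b) := by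
    intro s hs
    rw [hN₂]
    unfold luxNorm
    apply le_csInf (luxSet_nonempty hsc₂ hnn₂ _)
    rintro c ⟨hcpos, hcle⟩
    -- from the membership: Θ₂ ((s/c) • a) ≤ 1
    have hkey : Θ₂ ((((s / c : ℝ) : 𝕜)) • a) ≤ 1 := by
      have h1 : (((c⁻¹ : ℝ) : 𝕜)) • ((((s : ℝ) : 𝕜)) • a) = (((s / c : ℝ) : 𝕜)) • a := by
        push_cast
        rw [smul_smul]
        ring_nf
      have h2 : Ψ₂ ((((c⁻¹ : ℝ) : 𝕜)) • ((((s : ℝ) : 𝕜)) • a, b)) ≤ 1 := hcle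
      rw [Prod.smul_mk, h1] at h2
      have : 0 ≤ Φ₂ ((((c⁻¹ : ℝ) : 𝕜)) • b) := hΦ₂.nonneg _
      simp only [hΨ₂] at h2
      linarith
    set r : ℝ := s / c with hr
    have hrnn : 0 ≤ r := div_nonneg hs hcpos.le
    by_cases hr1 : r ≤ 1
    · -- then s ≤ c
      have hsc : s ≤ c := by
        rw [hr, div_le_one hcpos] at hr1
        exact hr1
      calc s * δ ≤ s * 1 := mul_le_mul_of_nonneg_left hδle1 hs
        _ = s := mul_one s
        _ ≤ c := hsc
    · push_neg at hr1
      have hrpos : 0 < r := lt_trans one_pos hr1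
      -- Θ₂ a ≤ r⁻¹ = c / s
      have h3 : Θ₂ a ≤ r⁻¹ := by
        have h4 : a = (((r⁻¹ : ℝ) : 𝕜)) • ((((r : ℝ) : 𝕜)) • a) := by
          rw [smul_smul]
          push_cast
          rw [inv_mul_cancel₀ (by exact_mod_cast hrpos.ne')]
          simp
        calc Θ₂ a = Θ₂ ((((r⁻¹ : ℝ) : 𝕜)) • ((((r : ℝ) : 𝕜)) • a)) := by rw [← h4]
          _ ≤ r⁻¹ * Θ₂ ((((r : ℝ) : 𝕜)) • a) :=
              modular_scale hΘ₂ r⁻¹ _ (inv_nonneg.mpr hrpos.le) (inv_le_one_of_one_le₀ hr1.le)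
          _ ≤ r⁻¹ * 1 := mul_le_mul_of_nonneg_left hkey (inv_nonneg.mpr hrpos.le)
          _ = r⁻¹ := mul_one _
      have hspos : 0 < s := by
        by_contra hsneg
        push_neg at hsneg
        have : s = 0 := le_antisymm hsneg hs
        rw [hr, this] at hrpos
        simp at hrpos
      have hrinv : r⁻¹ = c / s := by
        rw [hr]
        field_simp
      rw [hrinv] at h3
      have h5 : s * Θ₂ a ≤ c := by
        rw [div_eq_mul_inv] at h3
        calc s * Θ₂ a ≤ s * (c * s⁻¹) := mul_le_mul_of_nonneg_left h3 hs
          _ = c * (s * s⁻¹) := by ring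
          _ = c := by rw [mul_inv_cancel₀ hspos.ne', mul_one]
      calc s * δ ≤ s * Θ₂ a := mul_le_mul_of_nonneg_left (min_le_right _ _) hs
        _ ≤ c := h5
  -- derive the contradiction
  set M : ℝ := N₂ (0, b) with hM
  obtain ⟨n, hn⟩ := exists_nat_gt (M / δ)
  have hb1 : ((2 * n : ℕ) : ℝ) * δ ≤ M := by
    have := hlow ((2 * n : ℕ) : ℝ) (by positivity)
    have hcast : ((((2 * n : ℕ) : ℝ)) : 𝕜) = (((2 * n : ℕ)) : 𝕜) := by push_cast; ring
    rw [hcast, hconst n] at this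
    exact this
  have hb2 : M < ((2 * n : ℕ) : ℝ) * δ := by
    have h6 : M / δ < (n : ℝ) := hn
    have h7 : M < (n : ℝ) * δ := by
      have := mul_lt_mul_of_pos_right h6 hδpos
      rwa [div_mul_cancel₀ M hδpos.ne'] at this
    have h8 : (n : ℝ) * δ ≤ ((2 * n : ℕ) : ℝ) * δ := by
      apply mul_le_mul_of_nonneg_right _ hδpos.le
      push_cast
      nlinarith [Nat.cast_nonneg (α := ℝ) n]
    linarith
  linarith

end
end

section
/- Let (E n) be a sequence of finite-dimensional normed 𝕂-spaces and p : ℕ → ℝ with p n > 2 for all n and p n → 2, satisfying: (a) for every n and all x, y ∈ E n, ‖x+y‖² + ‖x−y‖² ≥ 2·(‖x‖^{p n} + ‖y‖^{p n})^{2/p n}; and (b) every E n has a basis ℬ n such that for every y ∈ ℬ n there is x ∈ ℬ n with ‖x + λ y‖^{p n} = 1 + |λ|^{p n} for every λ ∈ ℝ. Let E = (⊕_n E_n)_{ℓ₂} be the ℓ₂-direct sum. Then for every Hilbert space H over 𝕂, every linear isometric embedding T : E → E ⊕₂ H maps E onto E × {0}. -/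
open Filter Topology
open scoped ENNReal NNReal
open Real

section Aux

variable {𝕜 : Type*} [RCLike 𝕜] {E : ℕ → Type*} [∀ n, NormedAddCommGroup (E n)]
  [∀ n, NormedSpace 𝕜 (E n)]


lemma norm_sq_tsum (w : lp E 2) : ‖w‖ ^ 2 = ∑' k, ‖w k‖ ^ 2 := by
  have h := lp.norm_rpow_eq_tsum (E := E) (p := 2) (by norm_num) w
  have h2 : ((2 : ℝ≥0∞).toReal) = ((2:ℕ):ℝ) := by norm_num
  rw [h2] at h
  simp_rw [Real.rpow_natCast] at h
  exact h

lemma sq_summable (w : lp E 2) : Summable (fun k => ‖w k‖ ^ 2) := by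
  have h := Memℓp.summable (E := E) (p := 2) (by norm_num) (lp.memℓp w)
  have h2 : ((2 : ℝ≥0∞).toReal) = ((2:ℕ):ℝ) := by norm_num
  rw [h2] at h
  simp_rw [Real.rpow_natCast] at h
  exact h

lemma par_lower {α : Type*} [SeminormedAddCommGroup α] [NormedSpace ℝ α] (x y : α) :
    2 * ‖x‖ ^ 2 ≤ ‖x + y‖ ^ 2 + ‖x - y‖ ^ 2 := by
  have h : 2 * ‖x‖ ≤ ‖x + y‖ + ‖x - y‖ := by
    have := norm_add_le (x + y) (x - y)
    have h2 : (x + y) + (x - y) = (2:ℝ) • x := by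
      rw [two_smul]; abel
    rw [h2, norm_smul] at this
    simpa using this
  nlinarith [sq_nonneg (‖x + y‖ - ‖x - y‖), norm_nonneg x, h]

lemma le_zero_of_forall_le_rpow {c K ε δ : ℝ} (hε : 0 < ε) (hδ : 0 < δ)
    (h : ∀ t : ℝ, 0 < t → t ≤ δ → c ≤ K * t ^ ε) : c ≤ 0 := by
  have h3 : Tendsto (fun t : ℝ => t ^ ε) (𝓝 (0:ℝ)) (𝓝 ((0:ℝ) ^ ε)) :=
    (Real.continuousAt_rpow_const 0 ε (Or.inr hε.le)).tendsto
  rw [Real.zero_rpow hε.ne'] at h3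
  have h4 : Tendsto (fun t : ℝ => K * t ^ ε) (𝓝[>] (0:ℝ)) (𝓝 (K * 0)) :=
    (h3.const_mul K).mono_left nhdsWithin_le_nhds
  rw [mul_zero] at h4
  refine ge_of_tendsto h4 ?_
  filter_upwards [Ioc_mem_nhdsGT_of_mem (by simp [hδ] : (0:ℝ) ∈ Set.Ico 0 δ)] with t ht
  exact h t ht.1 ht.2

lemma chord_ineq {q u : ℝ} (hq : 1 ≤ q) (h0 : 0 ≤ u) (h1 : u ≤ 1) :
    (1 + u) ^ q ≤ 1 + (2 ^ q - 1) * u := by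
  have := (convexOn_rpow hq).2 (by simp : (1:ℝ) ∈ Set.Ici (0:ℝ))
    (by norm_num : (2:ℝ) ∈ Set.Ici (0:ℝ)) (by linarith : (0:ℝ) ≤ 1 - u) h0 (by ring)
  simp only [smul_eq_mul, mul_one] at this
  have e1 : 1 - u + u * 2 = 1 + u := by ring
  rw [e1, Real.one_rpow] at this
  linarith

lemma div_step' {t X K e P : ℝ} (ht0 : 0 < t)
    (h : t ^ P * X ≤ K * t ^ e) : X ≤ K * t ^ (e - P) := by
  have htP : 0 < t ^ P := Real.rpow_pos_of_pos ht0 P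
  have h2 : X * t ^ P ≤ K * t ^ e := by linarith [h]
  have h3 : X ≤ K * t ^ e / t ^ P := (le_div_iff₀ htP).mpr h2
  rw [Real.rpow_sub ht0, ← mul_div_assoc]
  exact h3

lemma div_step {t c P K e : ℝ} (ht0 : 0 < t) (hc : 0 ≤ c)
    (h : t ^ P * c ^ P ≤ K * t ^ e) : c ^ P ≤ K * t ^ (e - P) :=
  div_step' ht0 h

lemma key_coord (p : ℕ → ℝ) (hp : ∀ n, 2 < p n)
    (ha : ∀ n, ∀ x y : E n,
      2 * (‖x‖ ^ p n + ‖y‖ ^ p n) ^ (2 / p n) ≤ ‖x + y‖ ^ 2 + ‖x - y‖ ^ 2)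
    (u v : lp E 2) (hu : ‖u‖ = 1) {q : ℝ} (hq2 : 2 < q)
    (hn : ∀ t : ℝ, 0 ≤ t →
      ‖u + (t:𝕜) • v‖ ^ 2 + ‖u - (t:𝕜) • v‖ ^ 2 = 2 * ((1 + t ^ q) ^ (2 / q)))
    (m : ℕ) (hm : p m < q) : v m = 0 := by
  set a := ‖u m‖ with ha_def
  set c := ‖v m‖ with hc_def
  set P := p m with hP_def
  have hP2 : 2 < P := hp m
  have hP0 : 0 < P := by linarith
  have ha0 : 0 ≤ a := norm_nonneg _
  have hc0 : 0 ≤ c := norm_nonneg _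
  -- step 1 : the main inequality
  have main : ∀ t : ℝ, 0 < t → t ≤ 1 →
      (a ^ P + t ^ P * c ^ P) ^ (2 / P) ≤ a ^ 2 + t ^ q := by
    intro t ht0 ht1
    set B := 2 * ((a ^ P + (t * c) ^ P) ^ (2 / P)) with hB_def
    set g : ℕ → ℝ := fun k => 2 * ‖u k‖ ^ 2 with hg_def
    set G : ℕ → ℝ := fun k => if k = m then B else g k with hG_def
    set F : ℕ → ℝ := fun k =>
      ‖(u + (t:𝕜) • v) k‖ ^ 2 + ‖(u - (t:𝕜) • v) k‖ ^ 2 with hF_def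
    have hsumF : Summable F := (sq_summable _).add (sq_summable _)
    have htsumF : ∑' k, F k = 2 * ((1 + t ^ q) ^ (2 / q)) := by
      rw [Summable.tsum_add (sq_summable _) (sq_summable _), ← norm_sq_tsum, ← norm_sq_tsum,
        hn t ht0.le]
    have hsumg : Summable g := (sq_summable u).mul_left 2
    have htsumg : ∑' k, g k = 2 := by
      rw [tsum_mul_left, ← norm_sq_tsum, hu]; norm_num
    have hGg : G = fun k => g k + (if k = m then B - g m else 0) := by
      funext k
      by_cases hk : k = m <;> simp [hG_def, hk]
    have hsumG : Summable G := by
      rw [hGg]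
      exact hsumg.add (summable_of_ne_finset_zero (s := {m}) (by
        intro k hk
        simp only [Finset.mem_singleton] at hk
        simp [hk]))
    have hGF : ∀ k, G k ≤ F k := by
      intro k
      by_cases hk : k = m
      · subst hk
        have hcoord1 : (u + (t:𝕜) • v) k = u k + (t:𝕜) • v k := by
          rfl
        have hcoord2 : (u - (t:𝕜) • v) k = u k - (t:𝕜) • v k := by
          rfl
        have hnorm : ‖(t:𝕜) • v k‖ = t * c := by
          rw [norm_smul, RCLike.norm_ofReal, abs_of_pos ht0]
        have := ha k (u k) ((t:𝕜) • v k)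
        rw [hnorm] at this
        simp only [hG_def, if_pos rfl, hB_def, hF_def, hcoord1, hcoord2]
        exact this
      · simp only [hG_def, if_neg hk, hg_def, hF_def]
        letI : NormedSpace ℝ (E k) := NormedSpace.restrictScalars ℝ 𝕜 (E k)
        have hcoord1 : (u + (t:𝕜) • v) k = u k + (t:𝕜) • v k := by
          rfl
        have hcoord2 : (u - (t:𝕜) • v) k = u k - (t:𝕜) • v k := by
          rfl
        rw [hcoord1, hcoord2]
        exact par_lower (u k) ((t:𝕜) • v k)
    have hle : ∑' k, G k ≤ ∑' k, F k := Summable.tsum_le_tsum hGF hsumG hsumF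
    have htsumG : ∑' k, G k = B + (2 - g m) := by
      rw [Summable.tsum_eq_add_tsum_ite hsumG m]
      have e1 : (fun k => if k = m then 0 else G k) = (fun k => if k = m then 0 else g k) := by
        funext k; by_cases hk : k = m <;> simp [hG_def, hk]
      have e2 : ∑' k, (if k = m then (0:ℝ) else g k) = 2 - g m := by
        have := Summable.tsum_eq_add_tsum_ite hsumg m
        rw [htsumg] at this
        linarith
      rw [e1, e2]
      simp [hG_def]
    have hrpow_le : (1 + t ^ q) ^ (2 / q) ≤ 1 + t ^ q := by
      nth_rewrite 2 [show (1 + t ^ q) = (1 + t ^ q) ^ (1:ℝ) by rw [Real.rpow_one]]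
      apply Real.rpow_le_rpow_of_exponent_le
      · have : 0 ≤ t ^ q := Real.rpow_nonneg ht0.le q
        linarith
      · rw [div_le_one (by linarith)]; linarith
    have hgm : g m = 2 * a ^ 2 := by simp [hg_def, ha_def]
    have hmul : (t * c) ^ P = t ^ P * c ^ P := Real.mul_rpow ht0.le hc0
    rw [htsumG, htsumF, hgm] at hle
    rw [← hmul]
    nlinarith [hle, hrpow_le]
  -- step 2 : raise to the power P/2
  have main2 : ∀ t : ℝ, 0 < t → t ≤ 1 →
      a ^ P + t ^ P * c ^ P ≤ (a ^ 2 + t ^ q) ^ (P / 2) := by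
    intro t ht0 ht1
    have hX0 : 0 ≤ a ^ P + t ^ P * c ^ P := by
      have := Real.rpow_nonneg ha0 P
      have := mul_nonneg (Real.rpow_nonneg ht0.le P) (Real.rpow_nonneg hc0 P)
      linarith
    have h1 := Real.rpow_le_rpow (Real.rpow_nonneg hX0 (2 / P)) (main t ht0 ht1)
      (by positivity : (0:ℝ) ≤ P / 2)
    have h2 : ((a ^ P + t ^ P * c ^ P) ^ (2 / P)) ^ (P / 2) = a ^ P + t ^ P * c ^ P := by
      rw [← Real.rpow_mul hX0]
      rw [show (2 / P) * (P / 2) = 1 by field_simp]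
      exact Real.rpow_one _
    rwa [h2] at h1
  -- step 3 : conclude c ^ P ≤ 0
  have hcP : c ^ P ≤ 0 := by
    rcases eq_or_lt_of_le ha0 with haz | hap
    · -- case a = 0
      refine le_zero_of_forall_le_rpow (K := 1) (ε := q * (P / 2) - P) (δ := 1)
        (by nlinarith) one_pos ?_
      intro t ht0 ht1
      have h1 := main2 t ht0 ht1
      rw [← haz, Real.zero_rpow hP0.ne', zero_add] at h1
      have h2 : ((0:ℝ) ^ 2 + t ^ q) = t ^ q := by norm_num
      rw [h2, ← Real.rpow_mul ht0.le] at h1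
      exact div_step ht0 hc0 (by linarith [h1])
    · -- case a > 0
      set C := (2:ℝ) ^ (P / 2) - 1 with hC_def
      have hC0 : 0 ≤ C := by
        have := Real.one_le_rpow (by norm_num : (1:ℝ) ≤ 2) (by positivity : (0:ℝ) ≤ P / 2)
        simp only [hC_def]; linarith
      have ha2 : (0:ℝ) < a ^ 2 := by positivity
      refine le_zero_of_forall_le_rpow (K := C * a ^ P / a ^ 2) (ε := q - P)
        (δ := min 1 (a ^ (2 / q))) (by linarith)
        (lt_min one_pos (Real.rpow_pos_of_pos hap _)) ?_
      intro t ht0 htδ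
      have ht1 : t ≤ 1 := le_trans htδ (min_le_left _ _)
      have h1 := main2 t ht0 ht1
      have htq : t ^ q ≤ a ^ 2 := by
        have h2 : t ^ q ≤ (a ^ (2 / q)) ^ q :=
          Real.rpow_le_rpow ht0.le (le_trans htδ (min_le_right _ _)) (by linarith)
        rwa [← Real.rpow_mul ha0, show (2 / q) * q = ((2:ℕ):ℝ) by field_simp; norm_num,
          Real.rpow_natCast] at h2
      set u₀ : ℝ := t ^ q / a ^ 2 with hu₀_def
      have hu₀0 : 0 < u₀ := div_pos (Real.rpow_pos_of_pos ht0 q) ha2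
      have hu₀1 : u₀ ≤ 1 := (div_le_one ha2).mpr htq
      have hsplit : a ^ 2 + t ^ q = a ^ 2 * (1 + u₀) := by
        rw [hu₀_def]; field_simp
      have h2 : (a ^ 2 * (1 + u₀)) ^ (P / 2)
          = (a ^ 2) ^ (P / 2) * (1 + u₀) ^ (P / 2) :=
        Real.mul_rpow (by positivity) (by positivity)
      have h3 : (a ^ 2 : ℝ) ^ (P / 2) = a ^ P := by
        rw [← Real.rpow_two, ← Real.rpow_mul ha0, show (2:ℝ) * (P / 2) = P by ring]
      have h4 : (1 + u₀) ^ (P / 2) ≤ 1 + C * u₀ :=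
        chord_ineq (by linarith : 1 ≤ P / 2) hu₀0.le hu₀1
      have haP : (0:ℝ) ≤ a ^ P := Real.rpow_nonneg ha0 P
      have h5 : a ^ P + t ^ P * c ^ P ≤ a ^ P * (1 + C * u₀) := by
        calc a ^ P + t ^ P * c ^ P ≤ (a ^ 2 + t ^ q) ^ (P / 2) := h1
        _ = a ^ P * (1 + u₀) ^ (P / 2) := by rw [hsplit, h2, h3]
        _ ≤ a ^ P * (1 + C * u₀) := mul_le_mul_of_nonneg_left h4 haP
      have h6 : a ^ P * (1 + C * u₀) = a ^ P + (C * a ^ P / a ^ 2) * t ^ q := by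
        rw [hu₀_def]; field_simp
      have h7 : t ^ P * c ^ P ≤ (C * a ^ P / a ^ 2) * t ^ q := by
        rw [h6] at h5; linarith
      exact div_step ht0 hc0 h7
  have hceq : c ^ P = 0 := le_antisymm hcP (Real.rpow_nonneg hc0 P)
  have hc : c = 0 := (Real.rpow_eq_zero hc0 hP0.ne').mp hceq
  exact norm_eq_zero.mp hc

section Snd

variable {H : Type*} [NormedAddCommGroup H] [InnerProductSpace 𝕜 H]

lemma snd_vanish (T : lp E 2 →ₗᵢ[𝕜] WithLp 2 (lp E 2 × H)) {q : ℝ} (hq2 : 2 < q)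
    (x y : lp E 2) (hx : ‖x‖ = 1)
    (hxy : ∀ t : ℝ, 0 ≤ t →
      ‖x + (t:𝕜) • y‖ ^ 2 + ‖x - (t:𝕜) • y‖ ^ 2 = 2 * ((1 + t ^ q) ^ (2 / q))) :
    (T y).snd = 0 := by
  letI : NormedSpace ℝ (lp E 2) := NormedSpace.restrictScalars ℝ 𝕜 (lp E 2)
  have hFS : ∀ z : lp E 2, ‖z‖ ^ 2 = ‖(T z).fst‖ ^ 2 + ‖(T z).snd‖ ^ 2 := by
    intro z
    rw [← T.norm_map z]
    exact WithLp.prod_norm_sq_eq_of_L2 (T z)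
  have key : ∀ t : ℝ, 0 < t → t ≤ 1 → ‖(T y).snd‖ ^ 2 ≤ 1 * t ^ (q - ((2:ℕ):ℝ)) := by
    intro t ht0 ht1
    have h1 : ‖x + (t:𝕜) • y‖ ^ 2
        = ‖(T x).fst + (t:𝕜) • (T y).fst‖ ^ 2 + ‖(T x).snd + (t:𝕜) • (T y).snd‖ ^ 2 := by
      rw [hFS (x + (t:𝕜) • y), map_add, map_smul, WithLp.add_fst, WithLp.add_snd,
        WithLp.smul_fst, WithLp.smul_snd]
    have h2 : ‖x - (t:𝕜) • y‖ ^ 2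
        = ‖(T x).fst - (t:𝕜) • (T y).fst‖ ^ 2 + ‖(T x).snd - (t:𝕜) • (T y).snd‖ ^ 2 := by
      rw [hFS (x - (t:𝕜) • y), map_sub, map_smul, WithLp.sub_fst, WithLp.sub_snd,
        WithLp.smul_fst, WithLp.smul_snd]
    have hpar := par_lower ((T x).fst) ((t:𝕜) • (T y).fst)
    have hnt : ‖(t:𝕜) • (T y).snd‖ = t * ‖(T y).snd‖ := by
      rw [norm_smul, RCLike.norm_ofReal, abs_of_pos ht0]
    have hH2 : ‖(T x).snd + (t:𝕜) • (T y).snd‖ ^ 2 + ‖(T x).snd - (t:𝕜) • (T y).snd‖ ^ 2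
        = 2 * (‖(T x).snd‖ ^ 2 + t ^ 2 * ‖(T y).snd‖ ^ 2) := by
      have hpl := parallelogram_law_with_norm 𝕜 ((T x).snd) ((t:𝕜) • (T y).snd)
      rw [hnt] at hpl
      linear_combination hpl
    have hx2 : ‖(T x).fst‖ ^ 2 + ‖(T x).snd‖ ^ 2 = 1 := by
      rw [← hFS x, hx]; norm_num
    have hq1 : (1 + t ^ q) ^ (2 / q) ≤ 1 + t ^ q := by
      nth_rewrite 2 [show (1 + t ^ q) = (1 + t ^ q) ^ (1:ℝ) by rw [Real.rpow_one]]
      apply Real.rpow_le_rpow_of_exponent_le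
      · have : 0 ≤ t ^ q := Real.rpow_nonneg ht0.le q
        linarith
      · rw [div_le_one (by linarith)]; linarith
    have hmain := hxy t ht0.le
    rw [h1, h2] at hmain
    have hfinal : t ^ 2 * ‖(T y).snd‖ ^ 2 ≤ t ^ q := by linarith
    have hcast : t ^ ((2:ℕ):ℝ) * ‖(T y).snd‖ ^ 2 ≤ 1 * t ^ q := by
      rw [Real.rpow_natCast, one_mul]; exact hfinal
    exact div_step' ht0 hcast
  have hS0 : ‖(T y).snd‖ ^ 2 ≤ 0 :=
    le_zero_of_forall_le_rpow (by push_cast; linarith) one_pos key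
  have : ‖(T y).snd‖ = 0 := by nlinarith [norm_nonneg ((T y).snd), hS0]
  exact norm_eq_zero.mp this

end Snd

section Infra

lemma lp_single_add (n : ℕ) (x y : E n) :
    lp.single 2 n (x + y) = lp.single 2 n x + lp.single 2 n y := by
  apply lp.ext
  funext k
  rw [lp.coeFn_add, Pi.add_apply]
  by_cases hk : k = n
  · subst hk; simp [lp.single_apply_self]
  · simp [lp.single_apply_ne _ _ _ hk]

lemma lp_single_sub (n : ℕ) (x y : E n) :
    lp.single 2 n (x - y) = lp.single 2 n x - lp.single 2 n y := by
  apply lp.ext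
  funext k
  rw [lp.coeFn_sub, Pi.sub_apply]
  by_cases hk : k = n
  · subst hk; simp [lp.single_apply_self]
  · simp [lp.single_apply_ne _ _ _ hk]

lemma lp_norm_single (n : ℕ) (x : E n) : ‖lp.single 2 n x‖ = ‖x‖ := by
  exact lp.norm_single (E := E) (by norm_num : 0 < (2:ℝ≥0∞)) n x

lemma sq_of_rpow {r v q : ℝ} (hr : 0 ≤ r) (hq : 0 < q) (h : r ^ q = v) :
    r ^ (2:ℕ) = v ^ (2 / q) := by
  rw [← h, ← Real.rpow_mul hr, show q * (2 / q) = ((2:ℕ):ℝ) by field_simp; norm_num, Real.rpow_natCast]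

lemma pair_props (n : ℕ) {q : ℝ} (hq : 0 < q) (xe ye : E n)
    (hpair : ∀ lam : ℝ, ‖xe + (lam:𝕜) • ye‖ ^ q = 1 + |lam| ^ q) :
    ‖(lp.single 2 n xe : lp E 2)‖ = 1 ∧
    (∀ t : ℝ, 0 ≤ t →
      ‖(lp.single 2 n xe : lp E 2) + (t:𝕜) • lp.single 2 n ye‖ ^ 2 +
        ‖(lp.single 2 n xe : lp E 2) - (t:𝕜) • lp.single 2 n ye‖ ^ 2
      = 2 * ((1 + t ^ q) ^ (2 / q))) := by
  have hxe : ‖xe‖ = 1 := by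
    have h0 := hpair 0
    simp only [RCLike.ofReal_zero, zero_smul, add_zero, abs_zero,
      Real.zero_rpow hq.ne'] at h0
    have h1 : ‖xe‖ ^ q = (1:ℝ) ^ q := by rw [h0, Real.one_rpow]
    exact Real.rpow_left_injOn hq.ne' (Set.mem_setOf.mpr (norm_nonneg xe))
      (Set.mem_setOf.mpr zero_le_one) h1
  constructor
  · rw [lp_norm_single]; exact hxe
  · intro t ht
    have hplus : (lp.single 2 n xe : lp E 2) + (t:𝕜) • lp.single 2 n ye
        = lp.single 2 n (xe + (t:𝕜) • ye) := by
      rw [lp_single_add, lp.single_smul]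
    have hminus : (lp.single 2 n xe : lp E 2) - (t:𝕜) • lp.single 2 n ye
        = lp.single 2 n (xe - (t:𝕜) • ye) := by
      rw [lp_single_sub, lp.single_smul]
    have h1 : ‖xe + (t:𝕜) • ye‖ ^ q = 1 + t ^ q := by
      rw [hpair t, abs_of_nonneg ht]
    have h2 : ‖xe - (t:𝕜) • ye‖ ^ q = 1 + t ^ q := by
      have := hpair (-t)
      rw [abs_neg, abs_of_nonneg ht] at this
      rw [← this]
      push_cast
      rw [neg_smul, sub_eq_add_neg]
    rw [hplus, hminus, lp_norm_single, lp_norm_single]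
    rw [sq_of_rpow (norm_nonneg _) hq h1, sq_of_rpow (norm_nonneg _) hq h2]
    ring

lemma eq_sum_single {s : Finset ℕ} (z : lp E 2) (hz : ∀ m, m ∉ s → (z : ∀ k, E k) m = 0) :
    z = ∑ m ∈ s, lp.single 2 m (z m) := by
  apply lp.ext
  funext k
  rw [lp.coeFn_sum, Finset.sum_apply]
  simp only [lp.single_apply, Finset.sum_dite_eq']
  by_cases hk : k ∈ s
  · simp [hk]
  · simp [hk, hz k hk]

end Infra

section Sub

noncomputable def suppSub (𝕜 : Type*) [RCLike 𝕜] (E : ℕ → Type*) [∀ n, NormedAddCommGroup (E n)]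
    [∀ n, NormedSpace 𝕜 (E n)] (pred : ℕ → Prop) : Submodule 𝕜 (lp E 2) where
  carrier := {z | ∀ m, pred m → (z : ∀ k, E k) m = 0}
  add_mem' := by
    intro a b ha hb m hm
    rw [lp.coeFn_add, Pi.add_apply, ha m hm, hb m hm, add_zero]
  zero_mem' := by
    intro m hm
    exact rfl
  smul_mem' := by
    intro c a ha m hm
    rw [lp.coeFn_smul, Pi.smul_apply, ha m hm, smul_zero]

lemma mem_suppSub {pred : ℕ → Prop} {z : lp E 2} :
    z ∈ suppSub 𝕜 E pred ↔ ∀ m, pred m → (z : ∀ k, E k) m = 0 := Iff.rfl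

lemma suppSub_findim [∀ n, FiniteDimensional 𝕜 (E n)] (pred : ℕ → Prop)
    (hfin : {m | ¬ pred m}.Finite) :
    FiniteDimensional 𝕜 (suppSub 𝕜 E pred) := by
  classical
  let Φ : suppSub 𝕜 E pred →ₗ[𝕜] (∀ m : hfin.toFinset, E m) :=
    { toFun := fun z m => (z : lp E 2) m
      map_add' := by intro a b; funext m; simp [lp.coeFn_add]
      map_smul' := by intro c a; funext m; simp [lp.coeFn_smul] }
  have hΦ : Function.Injective Φ := by
    intro a b hab
    apply Subtype.ext
    apply lp.ext
    funext k
    by_cases hk : pred k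
    · rw [a.2 k hk, b.2 k hk]
    · have hk' : k ∈ hfin.toFinset := hfin.mem_toFinset.mpr hk
      exact congrFun hab ⟨k, hk'⟩
  exact FiniteDimensional.of_injective Φ hΦ

end Sub

end Aux

/-- Let `(E n)` be finite-dimensional normed spaces over `𝕂 = ℝ` or `ℂ` and `p n > 2`,
`p n → 2`, such that
(a) `‖x+y‖² + ‖x−y‖² ≥ 2 (‖x‖^{p n} + ‖y‖^{p n})^{2/p n}` for all `x, y ∈ E n`, and
(b) each `E n` has a basis `ℬ n` such that every `y ∈ ℬ n` admits `x ∈ ℬ n` with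
`‖x + λ y‖^{p n} = 1 + |λ|^{p n}` for every real `λ` (an `ℓ_{p n}`-pair).
Then for every Hilbert space `H` over `𝕂`, every linear isometric embedding `T` of the
`ℓ₂`-direct sum `E = (⊕_n E n)_{ℓ₂}` into `E ⊕₂ H` maps `E` onto `E × {0}`. -/
theorem stmt9 (𝕜 : Type*) [RCLike 𝕜] (E : ℕ → Type*) [∀ n, NormedAddCommGroup (E n)]
    [∀ n, NormedSpace 𝕜 (E n)] [∀ n, FiniteDimensional 𝕜 (E n)]
    (p : ℕ → ℝ) (hp : ∀ n, 2 < p n) (hp2 : Tendsto p atTop (𝓝 2))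
    (ha : ∀ n, ∀ x y : E n,
      2 * (‖x‖ ^ p n + ‖y‖ ^ p n) ^ (2 / p n) ≤ ‖x + y‖ ^ 2 + ‖x - y‖ ^ 2)
    (hb : ∀ n, ∃ (ι : Type) (b : Module.Basis ι 𝕜 (E n)), ∀ j : ι, ∃ i : ι,
      ∀ lam : ℝ, ‖b i + (lam : 𝕜) • b j‖ ^ p n = 1 + |lam| ^ p n)
    (H : Type*) [NormedAddCommGroup H] [InnerProductSpace 𝕜 H] [CompleteSpace H]
    (T : lp E 2 →ₗᵢ[𝕜] WithLp 2 (lp E 2 × H)) :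
    (∀ z : lp E 2, ∃ w : lp E 2, T z = (WithLp.equiv 2 (lp E 2 × H)).symm (w, 0)) ∧
    (∀ w : lp E 2, ∃ z : lp E 2, T z = (WithLp.equiv 2 (lp E 2 × H)).symm (w, 0)) := by
  classical
  let TfL : lp E 2 →ₗ[𝕜] lp E 2 := (LinearMap.fst 𝕜 (lp E 2) H) ∘ₗ
    ((WithLp.linearEquiv 2 𝕜 (lp E 2 × H)).toLinearMap ∘ₗ T.toLinearMap)
  have hTfL : ∀ z, TfL z = (T z).fst := fun z => rfl
  have hsplit : ∀ z : lp E 2, ‖z‖ ^ 2 = ‖(T z).fst‖ ^ 2 + ‖(T z).snd‖ ^ 2 := by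
    intro z
    rw [← T.norm_map z]
    exact WithLp.prod_norm_sq_eq_of_L2 (T z)
  -- Part A : the second components vanish
  have hsnd_single : ∀ (n : ℕ) (x : E n), (T (lp.single 2 n x)).snd = 0 := by
    intro n x
    obtain ⟨ι, b, hbp⟩ := hb n
    let L : E n →ₗ[𝕜] H :=
      { toFun := fun x => (T (lp.single 2 n x)).snd
        map_add' := by intro u v; rw [lp_single_add, map_add, WithLp.add_snd]
        map_smul' := by intro c u; rw [lp.single_smul, map_smul, WithLp.smul_snd]; rfl }
    have hLb : ∀ j, L (b j) = (0 : E n →ₗ[𝕜] H) (b j) := by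
      intro j
      obtain ⟨i, hpair⟩ := hbp j
      obtain ⟨h1, h2⟩ := pair_props n (by linarith [hp n] : 0 < p n) (b i) (b j) hpair
      exact snd_vanish T (hp n) _ _ h1 h2
    have hL0 : L = 0 := b.ext hLb
    exact LinearMap.congr_fun hL0 x
  have hTsbound : ∀ z : lp E 2, ‖(T z).snd‖ ≤ 1 * ‖z‖ := by
    intro z
    rw [one_mul]
    have h := hsplit z
    nlinarith [norm_nonneg ((T z).fst), norm_nonneg ((T z).snd), norm_nonneg z]
  have hsnd : ∀ z : lp E 2, (T z).snd = 0 := by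
    intro z
    let TsL : lp E 2 →ₗ[𝕜] H := (LinearMap.snd 𝕜 (lp E 2) H) ∘ₗ
      ((WithLp.linearEquiv 2 𝕜 (lp E 2 × H)).toLinearMap ∘ₗ T.toLinearMap)
    have hTsL : ∀ z, TsL z = (T z).snd := fun z => rfl
    let TsC : lp E 2 →L[𝕜] H := TsL.mkContinuous 1 (fun z => by rw [hTsL]; exact hTsbound z)
    have hsum := lp.hasSum_single (by norm_num : (2:ℝ≥0∞) ≠ ⊤) z
    have hmap := hsum.mapL TsC
    have h0 : ∀ i : ℕ, TsC (lp.single 2 i (z i)) = 0 := by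
      intro i
      show TsL _ = 0
      rw [hTsL]
      exact hsnd_single i (z i)
    rw [show (fun i : ℕ => TsC (lp.single 2 i (z i))) = (fun _ : ℕ => (0:H)) from
      funext h0] at hmap
    have := hmap.unique hasSum_zero
    rw [← hTsL z]
    exact this
  -- Part B : TfL is an isometry
  have hTfnorm : ∀ z, ‖TfL z‖ = ‖z‖ := by
    intro z
    have h := hsplit z
    rw [hsnd z, norm_zero, hTfL z] at *
    have h2 : ‖(T z).fst‖ ^ 2 = ‖z‖ ^ 2 := by rw [h]; norm_num
    nlinarith [norm_nonneg ((T z).fst), norm_nonneg z]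
  have hTfinj : Function.Injective TfL := by
    intro a b hab
    have : ‖a - b‖ = 0 := by
      rw [← hTfnorm (a - b), map_sub, hab, sub_self, norm_zero]
    simpa [sub_eq_zero] using norm_eq_zero.mp this
  -- coordinates below p n vanish for images of singles
  have hcoordb : ∀ (n : ℕ) (x : E n) (m : ℕ), p m < p n →
      (TfL (lp.single 2 n x) : ∀ k, E k) m = 0 := by
    intro n x m hm
    obtain ⟨ι, b, hbp⟩ := hb n
    let L : E n →ₗ[𝕜] E m :=
      { toFun := fun x => (TfL (lp.single 2 n x) : ∀ k, E k) m
        map_add' := by intro u v; rw [lp_single_add, map_add, lp.coeFn_add, Pi.add_apply]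
        map_smul' := by
          intro c u; rw [lp.single_smul, map_smul, lp.coeFn_smul, Pi.smul_apply]; rfl }
    have hLb : ∀ j, L (b j) = (0 : E n →ₗ[𝕜] E m) (b j) := by
      intro j
      obtain ⟨i, hpair⟩ := hbp j
      obtain ⟨h1, h2⟩ := pair_props n (by linarith [hp n] : 0 < p n) (b i) (b j) hpair
      have hkey := key_coord (𝕜 := 𝕜) p hp ha (TfL (lp.single 2 n (b i))) (TfL (lp.single 2 n (b j)))
        (by rw [hTfnorm]; exact h1) (hp n) ?_ m hm
      · exact hkey
      · intro t ht
        rw [show TfL (lp.single 2 n (b i)) + (t:𝕜) • TfL (lp.single 2 n (b j))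
            = TfL (lp.single 2 n (b i) + (t:𝕜) • lp.single 2 n (b j)) by
          rw [map_add, map_smul],
          show TfL (lp.single 2 n (b i)) - (t:𝕜) • TfL (lp.single 2 n (b j))
            = TfL (lp.single 2 n (b i) - (t:𝕜) • lp.single 2 n (b j)) by
          rw [map_sub, map_smul], hTfnorm, hTfnorm]
        exact h2 t ht
    have hL0 : L = 0 := b.ext hLb
    exact LinearMap.congr_fun hL0 x
  -- Part C : every single is in the range of TfL
  have hsingle_range : ∀ (n : ℕ) (x : E n), ∃ z, TfL z = lp.single 2 n x := by
    intro n x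
    have hfin : {m | ¬ p m < p n}.Finite := by
      have hev : ∀ᶠ m in atTop, p m < p n := hp2.eventually_lt_const (hp n)
      obtain ⟨N, hN⟩ := eventually_atTop.mp hev
      apply Set.Finite.subset (Set.finite_Iio N)
      intro m hm
      by_contra hmN
      simp only [Set.mem_Iio, not_lt] at hmN
      exact hm (hN m hmN)
    let V := suppSub 𝕜 E (fun m => p m < p n)
    haveI : FiniteDimensional 𝕜 V := suppSub_findim _ hfin
    have hmapsto : ∀ v : lp E 2, v ∈ V → TfL v ∈ V := by
      intro v hv
      have hdecomp : v = ∑ m ∈ hfin.toFinset, lp.single 2 m (v m) := by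
        apply eq_sum_single
        intro m hm
        rw [hfin.mem_toFinset] at hm
        simp only [Set.mem_setOf_eq, not_not] at hm
        exact hv m hm
      rw [hdecomp, map_sum]
      apply Submodule.sum_mem
      intro m hm
      rw [hfin.mem_toFinset] at hm
      simp only [Set.mem_setOf_eq, not_lt] at hm
      intro k hk
      exact hcoordb m (v m) k (lt_of_lt_of_le hk hm)
    let Tres : V →ₗ[𝕜] V := TfL.restrict hmapsto
    have hinj : Function.Injective Tres := by
      intro a b hab
      apply Subtype.ext
      apply hTfinj
      exact congrArg Subtype.val hab
    have hsurj := LinearMap.injective_iff_surjective.mp hinj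
    have hmem : lp.single 2 n x ∈ V := by
      intro k hk
      by_cases hkn : k = n
      · subst hkn; exact absurd hk (lt_irrefl _)
      · exact lp.single_apply_ne 2 n x hkn
    obtain ⟨zv, hzv⟩ := hsurj ⟨lp.single 2 n x, hmem⟩
    exact ⟨zv, congrArg Subtype.val hzv⟩
  -- Part D : TfL is surjective
  have hrange : ∀ w : lp E 2, ∃ z, TfL z = w := by
    intro w
    haveI : ∀ n, CompleteSpace (E n) := fun n => FiniteDimensional.complete 𝕜 (E n)
    have hiso : Isometry TfL := AddMonoidHomClass.isometry_of_norm _ hTfnorm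
    have hclosed : IsClosed (Set.range TfL) := hiso.isClosedEmbedding.isClosed_range
    have hsum := lp.hasSum_single (by norm_num : (2:ℝ≥0∞) ≠ ⊤) w
    have hmem : ∀ s : Finset ℕ, (∑ i ∈ s, lp.single 2 i (w i)) ∈ LinearMap.range TfL := by
      intro s
      apply Submodule.sum_mem
      intro i _
      obtain ⟨z, hz⟩ := hsingle_range i (w i)
      exact ⟨z, hz⟩
    have hw : w ∈ LinearMap.range TfL := by
      have hcl : IsClosed ((LinearMap.range TfL : Submodule 𝕜 (lp E 2)) : Set (lp E 2)) := by
        rwa [LinearMap.coe_range]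
      exact hcl.mem_of_tendsto hsum (Filter.Eventually.of_forall hmem)
    exact hw
  constructor
  · intro z
    refine ⟨TfL z, ?_⟩
    rw [Equiv.eq_symm_apply]
    apply Prod.ext
    · rw [WithLp.equiv_apply, WithLp.ofLp_fst, hTfL z]
    · rw [WithLp.equiv_apply, WithLp.ofLp_snd, hsnd z]
  · intro w
    obtain ⟨z, hz⟩ := hrange w
    refine ⟨z, ?_⟩
    rw [Equiv.eq_symm_apply]
    apply Prod.ext
    · rw [WithLp.equiv_apply, WithLp.ofLp_fst, ← hz, hTfL z]
    · rw [WithLp.equiv_apply, WithLp.ofLp_snd, hsnd z]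
end

section
/- Let (E n) be a sequence of finite-dimensional normed 𝕂-spaces, E = (⊕_n E_n)_{ℓ₂} their ℓ₂-direct sum, and H a Hilbert space over 𝕂. Fix n and suppose p > 2 is such that E n has a basis ℬ with the property that for every y ∈ ℬ there is x ∈ ℬ with ‖x + λ y‖^{p} = 1 + |λ|^{p} for every λ ∈ ℝ. Then every linear isometric embedding S : E n → E ⊕₂ H has range contained in E × {0}; that is, the H-component of S z vanishes for every z ∈ E n. -/
set_option maxHeartbeats 1000000 in
/-- Let `(E n)` be finite-dimensional normed spaces over `𝕂 = ℝ` or `ℂ`, `E = (⊕_n E n)_{ℓ₂}`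
their `ℓ₂`-direct sum and `H` a Hilbert space over `𝕂`.  Fix `n` and `p > 2` such that `E n`
has a basis `ℬ` with the property that every `y ∈ ℬ` admits `x ∈ ℬ` with
`‖x + λ y‖^p = 1 + |λ|^p` for every real `λ`.  Then every linear isometric embedding
`S : E n → E ⊕₂ H` has range contained in `E × {0}`: the `H`-component of `S z` vanishes
for every `z ∈ E n`. -/
theorem stmt10 (𝕜 : Type*) [RCLike 𝕜] (E : ℕ → Type*) [∀ n, NormedAddCommGroup (E n)]
    [∀ n, NormedSpace 𝕜 (E n)] [∀ n, FiniteDimensional 𝕜 (E n)]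
    (H : Type*) [NormedAddCommGroup H] [InnerProductSpace 𝕜 H] [CompleteSpace H]
    (n : ℕ) (p : ℝ) (hp : 2 < p)
    (hb : ∃ (ι : Type) (b : Module.Basis ι 𝕜 (E n)), ∀ j : ι, ∃ i : ι,
      ∀ lam : ℝ, ‖b i + (lam : 𝕜) • b j‖ ^ p = 1 + |lam| ^ p)
    (S : E n →ₗᵢ[𝕜] WithLp 2 (lp E 2 × H)) :
    ∀ z : E n, (WithLp.equiv 2 (lp E 2 × H) (S z)).2 = 0 := by
  obtain ⟨ι, b, hbB⟩ := hb
  have hp0 : p ≠ 0 := by positivity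
  -- the H-component as a linear map
  let T : E n →ₗ[𝕜] H :=
    (LinearMap.snd 𝕜 (lp E 2) H) ∘ₗ (WithLp.linearEquiv 2 𝕜 (lp E 2 × H)).toLinearMap ∘ₗ
      S.toLinearMap
  suffices hT : T = 0 by
    intro z
    have := congrFun (congrArg DFunLike.coe hT) z
    simpa [T] using this
  apply b.ext
  intro j
  obtain ⟨i, hxy⟩ := hbB j
  simp only [LinearMap.zero_apply]
  set x := b i with hx
  set y := b j with hy
  -- components
  set W : WithLp 2 (lp E 2 × H) := S x with hW
  set Z : WithLp 2 (lp E 2 × H) := S y with hZ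
  have hWnorm : ‖W‖ = 1 := by
    have h0 := hxy 0
    rw [show ((0:ℝ):𝕜) = 0 by simp, zero_smul, add_zero, abs_zero,
      Real.zero_rpow hp0, add_zero] at h0
    have : ‖x‖ = 1 := by
      have := Real.rpow_left_injOn hp0 (by simp : ‖x‖ ∈ {y : ℝ | 0 ≤ y})
        (by norm_num : (1:ℝ) ∈ {y : ℝ | 0 ≤ y}) (by simpa using h0)
      simpa using this
    rw [hW, S.norm_map, this]
  -- norm squared of W + μ•Z
  have hNsq : ∀ mu : ℝ, ‖W + ((mu:𝕜)) • Z‖ ^ (2:ℕ) = (1 + |mu| ^ p) ^ (2 / p) := by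
    intro mu
    have h1 : ‖W + (mu:𝕜) • Z‖ = ‖x + (mu:𝕜) • y‖ := by
      rw [hW, hZ, ← S.map_smul, ← S.map_add, S.norm_map]
    have h2 : (‖x + (mu:𝕜) • y‖ ^ p) ^ (2 / p) = ‖x + (mu:𝕜) • y‖ ^ (2:ℕ) := by
      rw [← Real.rpow_mul (norm_nonneg _), show p * (2 / p) = 2 by field_simp,
        Real.rpow_two, sq]
    rw [h1, ← hxy mu, h2]
  -- key inequality: for every real λ, λ^2 * ‖Z.2‖^2 ≤ |λ|^p
  have key : ∀ lam : ℝ, lam ^ 2 * ‖Z.snd‖ ^ 2 ≤ |lam| ^ p := by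
    intro lam
    have habs : (0:ℝ) ≤ |lam| ^ p := Real.rpow_nonneg (abs_nonneg _) _
    -- rpow bound : (1 + t)^(2/p) ≤ 1 + t
    have hb1 : (1 + |lam| ^ p) ^ (2 / p) ≤ 1 + |lam| ^ p := by
      nth_rewrite 2 [show (1:ℝ) + |lam| ^ p = (1 + |lam| ^ p) ^ (1:ℝ) by
        rw [Real.rpow_one]]
      exact Real.rpow_le_rpow_of_exponent_le (by linarith)
        (by rw [div_le_one (by linarith)]; linarith)
    -- components of sums
    have hplus : ‖W + (lam:𝕜) • Z‖ ^ (2:ℕ)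
        = ‖W.fst + (lam:𝕜) • Z.fst‖ ^ 2 + ‖W.snd + (lam:𝕜) • Z.snd‖ ^ 2 :=
      WithLp.prod_norm_sq_eq_of_L2 (W + (lam:𝕜) • Z)
    have hvec : W + ((-lam:ℝ):𝕜) • Z = W - (lam:𝕜) • Z := by
      push_cast
      rw [neg_smul, sub_eq_add_neg]
    have hminus : ‖W + ((-lam:ℝ):𝕜) • Z‖ ^ (2:ℕ)
        = ‖W.fst - (lam:𝕜) • Z.fst‖ ^ 2 + ‖W.snd - (lam:𝕜) • Z.snd‖ ^ 2 := by
      rw [hvec]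
      exact WithLp.prod_norm_sq_eq_of_L2 (W - (lam:𝕜) • Z)
    have hWsq : ‖W.fst‖ ^ 2 + ‖W.snd‖ ^ 2 = 1 := by
      rw [← WithLp.prod_norm_sq_eq_of_L2 W, hWnorm]; norm_num
    -- parallelogram in H
    have hpar := parallelogram_law_with_norm 𝕜 W.snd ((lam:𝕜) • Z.snd)
    have hsz : ‖(lam:𝕜) • Z.snd‖ = |lam| * ‖Z.snd‖ := by
      rw [norm_smul]; norm_num
    -- lower bound on lp-components
    have htri : 2 * ‖W.fst‖ ≤ ‖W.fst + (lam:𝕜) • Z.fst‖ + ‖W.fst - (lam:𝕜) • Z.fst‖ := by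
      have h3 := norm_add_le (W.fst + (lam:𝕜) • Z.fst) (W.fst - (lam:𝕜) • Z.fst)
      have h2 : (W.fst + (lam:𝕜) • Z.fst) + (W.fst - (lam:𝕜) • Z.fst) = W.fst + W.fst := by
        abel
      rw [h2] at h3
      calc 2 * ‖W.fst‖ = ‖W.fst + W.fst‖ := by
            rw [← two_smul 𝕜 W.fst, norm_smul]
            norm_num
        _ ≤ _ := h3
    -- abstract the norms as reals
    set A := ‖W.fst + (lam:𝕜) • Z.fst‖ with hA'
    set A' := ‖W.fst - (lam:𝕜) • Z.fst‖ with hA''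
    set U := ‖W.snd + (lam:𝕜) • Z.snd‖ with hU'
    set U' := ‖W.snd - (lam:𝕜) • Z.snd‖ with hU''
    have hfst : 2 * ‖W.fst‖ ^ 2 ≤ A ^ 2 + A' ^ 2 := by
      nlinarith [sq_nonneg (A - A'), norm_nonneg W.fst, norm_nonneg (W.fst + (lam:𝕜) • Z.fst),
        norm_nonneg (W.fst - (lam:𝕜) • Z.fst)]
    have hAe := hNsq lam
    have hBe := hNsq (-lam)
    rw [abs_neg] at hBe
    rw [hplus] at hAe
    rw [hminus] at hBe
    have e1 : A ^ 2 + U ^ 2 + (A' ^ 2 + U' ^ 2) ≤ 2 * (1 + |lam| ^ p) := by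
      rw [hAe, hBe]; linarith
    have hpar2 : U ^ 2 + U' ^ 2 = 2 * ‖W.snd‖ ^ 2 + 2 * (lam ^ 2 * ‖Z.snd‖ ^ 2) := by
      have habs2 : |lam| * ‖Z.snd‖ * (|lam| * ‖Z.snd‖) = lam ^ 2 * ‖Z.snd‖ ^ 2 := by
        rw [show lam ^ 2 = |lam| ^ 2 from (sq_abs lam).symm]; ring
      rw [hpar, hsz, ← habs2]; ring
    linarith [hfst, hpar2, e1, hWsq]
  -- conclude Z.2 = 0
  have hv : ∀ ε : ℝ, 0 < ε → ‖Z.snd‖ ^ 2 ≤ ε := by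
    intro ε hε
    set lam : ℝ := ε ^ (1 / (p - 2)) with hlam
    have hlampos : 0 < lam := Real.rpow_pos_of_pos hε _
    have hk := key lam
    rw [abs_of_pos hlampos] at hk
    have hdecomp : lam ^ p = lam ^ (2:ℕ) * lam ^ (p - 2) := by
      rw [← Real.rpow_natCast lam 2, ← Real.rpow_add hlampos]
      norm_num
    have hval : lam ^ (p - 2) = ε := by
      rw [hlam, ← Real.rpow_mul hε.le, one_div,
        inv_mul_cancel₀ (by linarith : p - 2 ≠ 0), Real.rpow_one]
    rw [hdecomp, hval] at hk
    exact le_of_mul_le_mul_left hk (by positivity : (0:ℝ) < lam ^ 2)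
  have hnormz : ‖Z.snd‖ ^ 2 ≤ 0 := by
    by_contra hcon
    push_neg at hcon
    have := hv (‖Z.snd‖ ^ 2 / 2) (by linarith)
    linarith
  have : ‖Z.snd‖ = 0 := by nlinarith [norm_nonneg Z.snd]
  have hz2 : Z.snd = 0 := norm_eq_zero.mp this
  simpa [T, hZ] using hz2
end

section
/- Let 2 ≤ p < ∞, d ∈ ℕ, and let x, y be elements of ℓ_p^d, the space 𝕂^d with norm ‖x‖_p = (∑_{k<d} |x k|^p)^{1/p} (𝕂 = ℝ or ℂ). Then ‖x+y‖_p² + ‖x−y‖_p² ≥ 2·(‖x‖_p^p + ‖y‖_p^p)^{2/p}. -/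
open Finset

lemma stmt11_superadd {a b r : ℝ} (ha : 0 ≤ a) (hb : 0 ≤ b) (hr : 1 ≤ r) :
    a ^ r + b ^ r ≤ (a + b) ^ r := by
  lift a to NNReal using ha
  lift b to NNReal using hb
  exact_mod_cast NNReal.add_rpow_le_rpow_add a b hr

/-- For `2 ≤ p < ∞` and `x, y ∈ ℓ_p^d` (i.e. `𝕂^d` with the `p`-norm, `𝕂 = ℝ` or `ℂ`), one has
`‖x+y‖_p² + ‖x−y‖_p² ≥ 2 (‖x‖_p^p + ‖y‖_p^p)^{2/p}`.  Here the `p`-norm is expressed through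
`‖z‖_p^p = ∑_{k<d} |z k|^p`, so that `‖z‖_p² = (∑_{k<d} |z k|^p)^{2/p}`. -/
theorem stmt11 (𝕜 : Type*) [RCLike 𝕜] (p : ℝ) (hp : 2 ≤ p) (d : ℕ) (x y : Fin d → 𝕜) :
    2 * ((∑ k, ‖x k‖ ^ p) + ∑ k, ‖y k‖ ^ p) ^ (2 / p) ≤
      (∑ k, ‖x k + y k‖ ^ p) ^ (2 / p) + (∑ k, ‖x k - y k‖ ^ p) ^ (2 / p) := by
  have hp0 : (0:ℝ) < p := by linarith
  set r : ℝ := p / 2 with hr_def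
  have hr1 : (1:ℝ) ≤ r := by rw [hr_def]; linarith
  have hr0 : (0:ℝ) < r := by linarith
  have h2r : 2 * r = p := by rw [hr_def]; ring
  have hinv : 1 / r = 2 / p := by rw [hr_def]; rw [one_div_div]
  set f : Fin d → ℝ := fun k => ‖x k + y k‖ ^ (2:ℝ) with hf_def
  set g : Fin d → ℝ := fun k => ‖x k - y k‖ ^ (2:ℝ) with hg_def
  have hf0 : ∀ k, 0 ≤ f k := fun k => Real.rpow_nonneg (norm_nonneg _) _
  have hg0 : ∀ k, 0 ≤ g k := fun k => Real.rpow_nonneg (norm_nonneg _) _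
  -- rewrite the p-th powers as r-th powers of squares
  have hsq : ∀ z : 𝕜, ‖z‖ ^ (2:ℝ) = ‖z‖ * ‖z‖ := by
    intro z
    rw [show (2:ℝ) = ((2:ℕ):ℝ) by norm_num, Real.rpow_natCast, sq]
  have hfr : ∀ k, f k ^ r = ‖x k + y k‖ ^ p := by
    intro k
    show (‖x k + y k‖ ^ (2:ℝ)) ^ r = _
    rw [← Real.rpow_mul (norm_nonneg _), h2r]
  have hgr : ∀ k, g k ^ r = ‖x k - y k‖ ^ p := by
    intro k
    show (‖x k - y k‖ ^ (2:ℝ)) ^ r = _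
    rw [← Real.rpow_mul (norm_nonneg _), h2r]
  -- parallelogram law pointwise
  have hpar : ∀ k, f k + g k = 2 * (‖x k‖ ^ (2:ℝ) + ‖y k‖ ^ (2:ℝ)) := by
    intro k
    rw [hf_def, hg_def]
    simp only [hsq]
    simpa only [sq] using parallelogram_law_with_norm 𝕜 (x k) (y k)
  -- Minkowski
  have hmink := Real.Lp_add_le univ f g hr1
  have habs : ∀ k : Fin d, |f k + g k| = f k + g k := fun k =>
    abs_of_nonneg (add_nonneg (hf0 k) (hg0 k))
  simp only [habs, fun k : Fin d => abs_of_nonneg (hf0 k),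
    fun k : Fin d => abs_of_nonneg (hg0 k)] at hmink
  -- compute the left side of Minkowski
  have hsum_eq : ∑ k, (f k + g k) ^ r
      = 2 ^ r * ∑ k, (‖x k‖ ^ (2:ℝ) + ‖y k‖ ^ (2:ℝ)) ^ r := by
    rw [mul_sum]
    refine Finset.sum_congr rfl fun k _ => ?_
    rw [hpar k, Real.mul_rpow (by norm_num)
      (add_nonneg (Real.rpow_nonneg (norm_nonneg _) _) (Real.rpow_nonneg (norm_nonneg _) _))]
  -- superadditivity pointwise
  have hsup : ∀ k : Fin d, ‖x k‖ ^ p + ‖y k‖ ^ p ≤ (‖x k‖ ^ (2:ℝ) + ‖y k‖ ^ (2:ℝ)) ^ r := by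
    intro k
    have h := stmt11_superadd (Real.rpow_nonneg (norm_nonneg (x k)) (2:ℝ))
      (Real.rpow_nonneg (norm_nonneg (y k)) (2:ℝ)) hr1
    rwa [← Real.rpow_mul (norm_nonneg _), ← Real.rpow_mul (norm_nonneg _), h2r] at h
  have hS : (∑ k, ‖x k‖ ^ p) + ∑ k, ‖y k‖ ^ p
      ≤ ∑ k, (‖x k‖ ^ (2:ℝ) + ‖y k‖ ^ (2:ℝ)) ^ r := by
    rw [← Finset.sum_add_distrib]
    exact Finset.sum_le_sum fun k _ => hsup k
  -- put it together
  have key : 2 * ((∑ k, ‖x k‖ ^ p) + ∑ k, ‖y k‖ ^ p) ^ (1/r)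
      ≤ (∑ k, (f k + g k) ^ r) ^ (1/r) := by
    rw [hsum_eq, Real.mul_rpow (Real.rpow_nonneg (by norm_num) _)
      (Finset.sum_nonneg fun k _ => Real.rpow_nonneg
        (add_nonneg (Real.rpow_nonneg (norm_nonneg _) _) (Real.rpow_nonneg (norm_nonneg _) _)) _),
      ← Real.rpow_mul (by norm_num : (0:ℝ) ≤ 2), mul_one_div, div_self hr0.ne',
      Real.rpow_one]
    gcongr

  have final := key.trans hmink
  simp only [hfr, hgr, hinv] at final
  exact final
end

section
/- Let 2 ≤ p < ∞, d ∈ ℕ, and let x, y be elements of ℓ_p^d, the space 𝕂^d with norm ‖x‖_p = (∑_{k<d} |x k|^p)^{1/p} (𝕂 = ℝ or ℂ). Then ‖x+y‖_p² + ‖x−y‖_p² ≤ 2·(‖x‖_p² + (p−1)·‖y‖_p²). -/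
section BCLAux

open Set

/-- Base case: `α ∈ [0,2]`. -/
lemma bcl_base (α c t : ℝ) (hα0 : 0 ≤ α) (hα2 : α ≤ 2) (hc : 1 ≤ c)
    (ht0 : 0 ≤ t) (ht1 : t ≤ 1) :
    (1 + t) ^ α + (1 - t) ^ α ≤ 2 * (1 + c * t ^ 2) ^ (α / 2) := by
  have h1t : (0:ℝ) ≤ 1 + t := by linarith
  have h2t : (0:ℝ) ≤ 1 - t := by linarith
  have hconc := Real.concaveOn_rpow (p := α / 2) (by linarith) (by linarith)
  have hu : ((1+t)^(2:ℝ)) ∈ Ici (0:ℝ) := mem_Ici.2 (by positivity)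
  have hv : ((1-t)^(2:ℝ)) ∈ Ici (0:ℝ) := mem_Ici.2 (by positivity)
  have h := hconc.2 hu hv (by norm_num : (0:ℝ) ≤ 1/2) (by norm_num : (0:ℝ) ≤ 1/2)
    (by norm_num)
  simp only [smul_eq_mul] at h
  have he1 : ((1+t)^(2:ℝ))^(α/2) = (1+t)^α := by
    rw [← Real.rpow_mul h1t]; congr 1; ring
  have he2 : ((1-t)^(2:ℝ))^(α/2) = (1-t)^α := by
    rw [← Real.rpow_mul h2t]; congr 1; ring
  have he3 : (1:ℝ)/2 * (1+t)^(2:ℝ) + 1/2 * (1-t)^(2:ℝ) = 1 + t^2 := by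
    rw [Real.rpow_two, Real.rpow_two]; ring
  rw [he1, he2, he3] at h
  have hmono : (1 + t^2 : ℝ)^(α/2) ≤ (1 + c*t^2)^(α/2) := by
    apply Real.rpow_le_rpow (by positivity) (by nlinarith) (by linarith)
  nlinarith [h, hmono]

lemma bcl_key (n : ℕ) : ∀ (α c t : ℝ), 0 ≤ α → α ≤ 2 * n + 2 → 1 ≤ c → α - 1 ≤ c →
    0 ≤ t → t ≤ 1 → (1 + t) ^ α + (1 - t) ^ α ≤ 2 * (1 + c * t ^ 2) ^ (α / 2) := by
  induction n with
  | zero =>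
    intro α c t h0 h2 hc _ ht0 ht1
    exact bcl_base α c t h0 (by norm_num at h2; linarith) hc ht0 ht1
  | succ n ih =>
    intro α c t hα0 hα2 hc hαc ht0 ht1
    by_cases hle : α ≤ 2 * n + 2
    · exact ih α c t hα0 hle hc hαc ht0 ht1
    push_neg at hle
    have hn0 : (0:ℝ) ≤ (n:ℝ) := Nat.cast_nonneg n
    have hα2' : 2 < α := by linarith
    have IH : ∀ s : ℝ, 0 ≤ s → s ≤ 1 →
        (1 + s) ^ (α - 2) + (1 - s) ^ (α - 2) ≤ 2 * (1 + c * s ^ 2) ^ ((α - 2) / 2) := by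
      intro s hs0 hs1
      refine ih (α - 2) c s (by linarith) ?_ hc (by linarith) hs0 hs1
      push_cast at hα2
      linarith
    set g : ℝ → ℝ :=
      fun s => 2 * c * s * (1 + c * s ^ 2) ^ ((α - 2) / 2) - (1 + s) ^ (α - 1)
        + (1 - s) ^ (α - 1) with hg_def
    have hc0 : (0:ℝ) < c := by linarith
    -- derivative of g
    have hgderiv : ∀ x ∈ Ioo (0:ℝ) 1, HasDerivAt g
        ((2 * c * 1 * (1 + c * x ^ 2) ^ ((α - 2) / 2)
          + 2 * c * x * ((α - 2) / 2 * (1 + c * x ^ 2) ^ ((α - 2) / 2 - 1) * (c * (2 * x ^ 1))))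
          - (α - 1) * (1 + x) ^ (α - 1 - 1) * 1
          + (α - 1) * (1 - x) ^ (α - 1 - 1) * (-1)) x := by
      intro x hx
      have hx0 : (0:ℝ) < x := hx.1
      have hx1 : x < 1 := hx.2
      have hP : (0:ℝ) < 1 + c * x ^ 2 := by positivity
      have hd1 : HasDerivAt (fun s : ℝ => 1 + c * s ^ 2) (c * (2 * x ^ 1)) x :=
        ((hasDerivAt_pow 2 x).const_mul c).const_add 1
      have hd2 := hd1.rpow_const (p := (α - 2) / 2) (Or.inl hP.ne')
      have hd3 : HasDerivAt (fun s : ℝ => 2 * c * s) (2 * c * 1) x :=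
        (hasDerivAt_id x).const_mul (2 * c)
      have hd4 := hd3.mul hd2
      have hd5 := ((hasDerivAt_id x).const_add 1).rpow_const (p := α - 1)
        (Or.inl (by positivity))
      have hd6 := ((hasDerivAt_id x).const_sub 1).rpow_const (p := α - 1)
        (Or.inl (show (1:ℝ) - x ≠ 0 by nlinarith))
      have := (hd4.sub hd5).add hd6
      refine this.congr_deriv ?_
      simp only [id_eq]
      ring
    have hgd_nonneg : ∀ x ∈ Ioo (0:ℝ) 1, 0 ≤ deriv g x := by
      intro x hx
      rw [(hgderiv x hx).deriv]
      have hx0 : (0:ℝ) < x := hx.1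
      have hx1 : x < 1 := hx.2
      have hP : (0:ℝ) < 1 + c * x ^ 2 := by positivity
      have hQ : (0:ℝ) ≤ (1 + c * x ^ 2) ^ ((α - 2) / 2) := Real.rpow_nonneg hP.le _
      have hQ1 : (0:ℝ) ≤ (1 + c * x ^ 2) ^ ((α - 2) / 2 - 1) := Real.rpow_nonneg hP.le _
      have hIH := IH x hx0.le hx1.le
      have he : α - 1 - 1 = α - 2 := by ring
      rw [he]
      have hU : (0:ℝ) ≤ (1 + x) ^ (α - 2) := Real.rpow_nonneg (by linarith) _
      have hV : (0:ℝ) ≤ (1 - x) ^ (α - 2) := Real.rpow_nonneg (by linarith) _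
      have h1 : (α - 1) * ((1 + x) ^ (α - 2) + (1 - x) ^ (α - 2))
          ≤ c * (2 * (1 + c * x ^ 2) ^ ((α - 2) / 2)) := by
        calc (α - 1) * ((1 + x) ^ (α - 2) + (1 - x) ^ (α - 2))
            ≤ c * ((1 + x) ^ (α - 2) + (1 - x) ^ (α - 2)) := by nlinarith
          _ ≤ c * (2 * (1 + c * x ^ 2) ^ ((α - 2) / 2)) := by nlinarith
      nlinarith [mul_nonneg (mul_nonneg (by positivity : (0:ℝ) ≤ 2 * c * x)
        (mul_nonneg (by linarith : (0:ℝ) ≤ (α - 2) / 2) hQ1))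
        (by positivity : (0:ℝ) ≤ c * (2 * x ^ 1))]
    have hgcont : ContinuousOn g (Icc (0:ℝ) 1) := by
      have c1 : ContinuousOn (fun s : ℝ => 2 * c * s) (Icc (0:ℝ) 1) :=
        (continuous_const.mul continuous_id).continuousOn
      have c2 : ContinuousOn (fun s : ℝ => (1 + c * s ^ 2) ^ ((α - 2) / 2)) (Icc (0:ℝ) 1) :=
        (continuous_const.add (continuous_const.mul (continuous_pow 2))).continuousOn.rpow_const
          (fun x _ => Or.inr (by linarith))
      have c3 : ContinuousOn (fun s : ℝ => (1 + s) ^ (α - 1)) (Icc (0:ℝ) 1) :=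
        (continuous_const.add continuous_id).continuousOn.rpow_const
          (fun x _ => Or.inr (by linarith))
      have c4 : ContinuousOn (fun s : ℝ => (1 - s) ^ (α - 1)) (Icc (0:ℝ) 1) :=
        (continuous_const.sub continuous_id).continuousOn.rpow_const
          (fun x _ => Or.inr (by linarith))
      exact ((c1.mul c2).sub c3).add c4
    have hgmono : MonotoneOn g (Icc (0:ℝ) 1) := by
      apply monotoneOn_of_deriv_nonneg (convex_Icc 0 1) hgcont
      · rw [interior_Icc]
        exact fun x hx => (hgderiv x hx).differentiableAt.differentiableWithinAt
      · rw [interior_Icc]; exact hgd_nonneg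
    have hg0 : g 0 = 0 := by simp [hg_def]
    have hgge : ∀ s ∈ Icc (0:ℝ) 1, 0 ≤ g s := by
      intro s hs
      have := hgmono (left_mem_Icc.2 zero_le_one) hs hs.1
      rw [hg0] at this; exact this
    -- now the main function
    set f : ℝ → ℝ :=
      fun s => 2 * (1 + c * s ^ 2) ^ (α / 2) - (1 + s) ^ α - (1 - s) ^ α with hf_def
    have hfderiv : ∀ x ∈ Ioo (0:ℝ) 1, HasDerivAt f
        (2 * (α / 2 * (1 + c * x ^ 2) ^ ((α - 2) / 2) * (c * (2 * x ^ 1)))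
          - α * (1 + x) ^ (α - 1) * 1 - α * (1 - x) ^ (α - 1) * (-1)) x := by
      intro x hx
      have hx0 : (0:ℝ) < x := hx.1
      have hx1 : x < 1 := hx.2
      have hP : (0:ℝ) < 1 + c * x ^ 2 := by positivity
      have hd1 : HasDerivAt (fun s : ℝ => 1 + c * s ^ 2) (c * (2 * x ^ 1)) x :=
        ((hasDerivAt_pow 2 x).const_mul c).const_add 1
      have hd2 := (hd1.rpow_const (p := α / 2) (Or.inl hP.ne')).const_mul 2
      have hd5 := ((hasDerivAt_id x).const_add 1).rpow_const (p := α)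
        (Or.inl (by positivity))
      have hd6 := ((hasDerivAt_id x).const_sub 1).rpow_const (p := α)
        (Or.inl (show (1:ℝ) - x ≠ 0 by nlinarith))
      have heq : α / 2 - 1 = (α - 2) / 2 := by ring
      rw [heq] at hd2
      have := (hd2.sub hd5).sub hd6
      refine this.congr_deriv ?_
      simp only [id_eq]
      ring
    have hfd_nonneg : ∀ x ∈ Ioo (0:ℝ) 1, 0 ≤ deriv f x := by
      intro x hx
      rw [(hfderiv x hx).deriv]
      have hgx := hgge x (Ioo_subset_Icc_self hx)
      have : 2 * (α / 2 * (1 + c * x ^ 2) ^ ((α - 2) / 2) * (c * (2 * x ^ 1)))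
          - α * (1 + x) ^ (α - 1) * 1 - α * (1 - x) ^ (α - 1) * (-1) = α * g x := by
        simp only [hg_def]; ring
      rw [this]
      exact mul_nonneg hα0 hgx
    have hfcont : ContinuousOn f (Icc (0:ℝ) 1) := by
      have c2 : ContinuousOn (fun s : ℝ => 2 * (1 + c * s ^ 2) ^ (α / 2)) (Icc (0:ℝ) 1) :=
        continuousOn_const.mul
          ((continuous_const.add (continuous_const.mul (continuous_pow 2))).continuousOn.rpow_const
            (fun x _ => Or.inr (by linarith)))
      have c3 : ContinuousOn (fun s : ℝ => (1 + s) ^ α) (Icc (0:ℝ) 1) :=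
        (continuous_const.add continuous_id).continuousOn.rpow_const
          (fun x _ => Or.inr (by linarith))
      have c4 : ContinuousOn (fun s : ℝ => (1 - s) ^ α) (Icc (0:ℝ) 1) :=
        (continuous_const.sub continuous_id).continuousOn.rpow_const
          (fun x _ => Or.inr (by linarith))
      exact (c2.sub c3).sub c4
    have hfmono : MonotoneOn f (Icc (0:ℝ) 1) := by
      apply monotoneOn_of_deriv_nonneg (convex_Icc 0 1) hfcont
      · rw [interior_Icc]
        exact fun x hx => (hfderiv x hx).differentiableAt.differentiableWithinAt
      · rw [interior_Icc]; exact hfd_nonneg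
    have hf0 : f 0 = 0 := by norm_num [hf_def]
    have := hfmono (left_mem_Icc.2 zero_le_one) (mem_Icc.2 ⟨ht0, ht1⟩) ht0
    rw [hf0] at this
    simp only [hf_def] at this
    linarith

lemma bcl_scaled (α c t : ℝ) (hα : 2 ≤ α) (hc : 1 ≤ c) (hαc : α - 1 ≤ c)
    (ht0 : 0 ≤ t) (ht1 : t ≤ 1) :
    (1 + t) ^ α + (1 - t) ^ α ≤ 2 * (1 + c * t ^ 2) ^ (α / 2) := by
  refine bcl_key ⌈α⌉₊ α c t (by linarith) ?_ hc hαc ht0 ht1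
  have := Nat.le_ceil α
  linarith

/-- Real two-point inequality, case `b ≤ a`. -/
lemma real_half (p a b : ℝ) (hp : 2 ≤ p) (hb : 0 ≤ b) (hab : b ≤ a) :
    (a + b) ^ p + (a - b) ^ p ≤ 2 * (a ^ 2 + (p - 1) * b ^ 2) ^ (p / 2) := by
  have hp0 : (0:ℝ) < p := by linarith
  have ha : 0 ≤ a := le_trans hb hab
  rcases eq_or_lt_of_le ha with h | h
  · have hb0 : b = 0 := le_antisymm (h ▸ hab) hb
    subst hb0
    rw [← h]
    norm_num [Real.zero_rpow hp0.ne', Real.zero_rpow (by positivity : p/2 ≠ 0)]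
  · set t := b / a with ht_def
    have ht0 : 0 ≤ t := div_nonneg hb h.le
    have ht1 : t ≤ 1 := (div_le_one h).2 hab
    have key := bcl_scaled p (p - 1) t hp (by linarith) (by linarith) ht0 ht1
    have hmul := mul_le_mul_of_nonneg_left key (Real.rpow_nonneg h.le p)
    have e1 : a ^ p * (1 + t) ^ p = (a + b) ^ p := by
      rw [← Real.mul_rpow h.le (by linarith)]
      congr 1
      rw [ht_def]; field_simp
    have e2 : a ^ p * (1 - t) ^ p = (a - b) ^ p := by
      rw [← Real.mul_rpow h.le (by linarith)]
      congr 1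
      rw [ht_def]; field_simp
    have e3 : a ^ p * (2 * (1 + (p - 1) * t ^ 2) ^ (p / 2))
        = 2 * (a ^ 2 + (p - 1) * b ^ 2) ^ (p / 2) := by
      have hap : a ^ p = (a ^ 2) ^ (p / 2) := by
        rw [← Real.rpow_natCast a 2, ← Real.rpow_mul h.le]
        congr 1; ring
      rw [hap, mul_left_comm, ← Real.mul_rpow (by positivity)
        (by nlinarith [sq_nonneg t] : (0:ℝ) ≤ 1 + (p - 1) * t ^ 2)]
      congr 2
      rw [ht_def]; field_simp
    rw [mul_add, e1, e2, e3] at hmul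
    exact hmul

/-- Real two-point inequality. -/
lemma real_two_point (p a b : ℝ) (hp : 2 ≤ p) (ha : 0 ≤ a) (hb : 0 ≤ b) :
    (a + b) ^ p + |a - b| ^ p ≤ 2 * (a ^ 2 + (p - 1) * b ^ 2) ^ (p / 2) := by
  rcases le_total b a with h | h
  · rw [abs_of_nonneg (by linarith)]
    exact real_half p a b hp hb h
  · rw [abs_of_nonpos (by linarith), neg_sub]
    have := real_half p b a hp ha h
    rw [add_comm a b]
    refine le_trans this ?_
    have hle : b ^ 2 + (p - 1) * a ^ 2 ≤ a ^ 2 + (p - 1) * b ^ 2 := by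
      nlinarith [mul_nonneg (by linarith : (0:ℝ) ≤ p - 2)
        (mul_nonneg (by linarith : (0:ℝ) ≤ b - a) (by linarith : (0:ℝ) ≤ b + a))]
    have := Real.rpow_le_rpow (by nlinarith [sq_nonneg b, sq_nonneg a]) hle
      (by linarith : (0:ℝ) ≤ p / 2)
    linarith

/-- Convexity step: moving `r` to the extreme `A*B`. -/
lemma mid_ineq (q A B r : ℝ) (hq : 1 ≤ q) (hA : 0 ≤ A) (hB : 0 ≤ B) (hr : |r| ≤ A * B) :
    (A ^ 2 + 2 * r + B ^ 2) ^ q + (A ^ 2 - 2 * r + B ^ 2) ^ q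
      ≤ ((A + B) ^ 2) ^ q + ((A - B) ^ 2) ^ q := by
  rcases eq_or_lt_of_le (mul_nonneg hA hB) with h0 | h0
  · have hr0 : r = 0 := by
      have := abs_nonneg r
      have : |r| = 0 := le_antisymm (h0 ▸ hr) (abs_nonneg r)
      exact abs_eq_zero.1 this
    subst hr0
    have : A * B = 0 := h0.symm
    have e1 : A ^ 2 + 2 * 0 + B ^ 2 = (A + B) ^ 2 := by nlinarith
    have e2 : A ^ 2 - 2 * 0 + B ^ 2 = (A - B) ^ 2 := by nlinarith
    rw [e1, e2]
  · set lam := (A * B + r) / (2 * (A * B)) with hlam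
    have hrle := (abs_le.1 hr)
    have hlam0 : 0 ≤ lam := by
      apply div_nonneg _ (by linarith)
      linarith [hrle.1]
    have hlam1 : lam ≤ 1 := by
      rw [div_le_one (by linarith)]
      linarith [hrle.2]
    have hcvx := convexOn_rpow hq
    have hu : ((A + B) ^ 2 : ℝ) ∈ Ici (0:ℝ) := mem_Ici.2 (by positivity)
    have hv : ((A - B) ^ 2 : ℝ) ∈ Ici (0:ℝ) := mem_Ici.2 (by positivity)
    have h1 := hcvx.2 hu hv (show (0:ℝ) ≤ lam from hlam0)
      (show (0:ℝ) ≤ 1 - lam by linarith) (show lam + (1 - lam) = 1 by ring)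
    have h2 := hcvx.2 hv hu (show (0:ℝ) ≤ lam from hlam0)
      (show (0:ℝ) ≤ 1 - lam by linarith) (show lam + (1 - lam) = 1 by ring)
    simp only [smul_eq_mul] at h1 h2
    have hne : (2 : ℝ) * (A * B) ≠ 0 := by positivity
    have e1 : lam * (A + B) ^ 2 + (1 - lam) * (A - B) ^ 2 = A ^ 2 + 2 * r + B ^ 2 := by
      rw [hlam]
      field_simp [left_ne_zero_of_mul h0.ne', right_ne_zero_of_mul h0.ne']
      ring
    have e2 : lam * (A - B) ^ 2 + (1 - lam) * (A + B) ^ 2 = A ^ 2 - 2 * r + B ^ 2 := by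
      rw [hlam]
      field_simp [left_ne_zero_of_mul h0.ne', right_ne_zero_of_mul h0.ne']
      ring
    rw [e1] at h1
    rw [e2] at h2
    nlinarith [h1, h2]

/-- Two-point inequality over `𝕜`. -/
lemma k_two_point (𝕜 : Type*) [RCLike 𝕜] (p : ℝ) (hp : 2 ≤ p) (a b : 𝕜) :
    ‖a + b‖ ^ p + ‖a - b‖ ^ p ≤ 2 * (‖a‖ ^ 2 + (p - 1) * ‖b‖ ^ 2) ^ (p / 2) := by
  have hq : 1 ≤ p / 2 := by linarith
  set A := ‖a‖ with hA
  set B := ‖b‖ with hB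
  have hA0 : 0 ≤ A := norm_nonneg a
  have hB0 : 0 ≤ B := norm_nonneg b
  set r := RCLike.re (inner 𝕜 a b) with hr_def
  have hr : |r| ≤ A * B :=
    (RCLike.abs_re_le_norm _).trans (norm_inner_le_norm a b)
  have hadd : ‖a + b‖ ^ 2 = A ^ 2 + 2 * r + B ^ 2 := by
    rw [@norm_add_sq 𝕜]
  have hsub : ‖a - b‖ ^ 2 = A ^ 2 - 2 * r + B ^ 2 := by
    rw [@norm_sub_sq 𝕜]
  have sq_rpow : ∀ u : ℝ, 0 ≤ u → u ^ p = (u ^ 2) ^ (p / 2) := by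
    intro u hu
    rw [← Real.rpow_natCast u 2, ← Real.rpow_mul hu]
    congr 1; push_cast; ring
  rw [sq_rpow _ (norm_nonneg (a+b)), sq_rpow _ (norm_nonneg (a-b)), hadd, hsub]
  calc (A ^ 2 + 2 * r + B ^ 2) ^ (p/2) + (A ^ 2 - 2 * r + B ^ 2) ^ (p/2)
      ≤ ((A + B) ^ 2) ^ (p/2) + ((A - B) ^ 2) ^ (p/2) := mid_ineq (p/2) A B r hq hA0 hB0 hr
    _ = (A + B) ^ p + |A - B| ^ p := by
        rw [← sq_rpow _ (by linarith), ← sq_abs (A - B), ← sq_rpow _ (abs_nonneg _)]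
    _ ≤ 2 * (A ^ 2 + (p - 1) * B ^ 2) ^ (p / 2) := real_two_point p A B hp hA0 hB0

end BCLAux

open Finset

/-- For `2 ≤ p < ∞` and `x, y ∈ ℓ_p^d` (i.e. `𝕂^d` with the `p`-norm, `𝕂 = ℝ` or `ℂ`), one has
`‖x+y‖_p² + ‖x−y‖_p² ≤ 2 (‖x‖_p² + (p−1) ‖y‖_p²)`.  Here the `p`-norm is expressed through
`‖z‖_p^p = ∑_{k<d} |z k|^p`, so that `‖z‖_p² = (∑_{k<d} |z k|^p)^{2/p}`. -/
theorem stmt15 (𝕜 : Type*) [RCLike 𝕜] (p : ℝ) (hp : 2 ≤ p) (d : ℕ) (x y : Fin d → 𝕜) :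
    (∑ k, ‖x k + y k‖ ^ p) ^ (2 / p) + (∑ k, ‖x k - y k‖ ^ p) ^ (2 / p) ≤
      2 * ((∑ k, ‖x k‖ ^ p) ^ (2 / p) + (p - 1) * (∑ k, ‖y k‖ ^ p) ^ (2 / p)) := by
  have hp0 : (0:ℝ) < p := by linarith
  have hq : (1:ℝ) ≤ p / 2 := by linarith
  have sq_rpow : ∀ u : ℝ, 0 ≤ u → (u ^ 2) ^ (p / 2) = u ^ p := by
    intro u hu
    rw [← Real.rpow_natCast u 2, ← Real.rpow_mul hu]
    congr 1; push_cast; ring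
  set A := ∑ k, ‖x k + y k‖ ^ p with hA
  set B := ∑ k, ‖x k - y k‖ ^ p with hB
  have hA0 : 0 ≤ A := Finset.sum_nonneg fun k _ => Real.rpow_nonneg (norm_nonneg _) _
  have hB0 : 0 ≤ B := Finset.sum_nonneg fun k _ => Real.rpow_nonneg (norm_nonneg _) _
  have hS0 : ∀ k : Fin d, (0:ℝ) ≤ ‖x k‖ ^ 2 + (p - 1) * ‖y k‖ ^ 2 := by
    intro k
    have h1 := sq_nonneg ‖x k‖
    have h2 := sq_nonneg ‖y k‖
    nlinarith
  have hsum : A + B ≤ 2 * ∑ k, (‖x k‖ ^ 2 + (p - 1) * ‖y k‖ ^ 2) ^ (p / 2) := by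
    rw [hA, hB, Finset.mul_sum, ← Finset.sum_add_distrib]
    exact Finset.sum_le_sum fun k _ => k_two_point 𝕜 p hp (x k) (y k)
  have hT0 : (0:ℝ) ≤ ∑ k, (‖x k‖ ^ 2 + (p - 1) * ‖y k‖ ^ 2) ^ (p / 2) :=
    Finset.sum_nonneg fun k _ => Real.rpow_nonneg (hS0 k) _
  -- concavity of `t ↦ t ^ (2/p)`
  have hconc := Real.concaveOn_rpow (p := 2 / p) (by positivity)
    (by rw [div_le_one hp0]; linarith)
  have hhalf := hconc.2 (Set.mem_Ici.2 hA0) (Set.mem_Ici.2 hB0)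
    (show (0:ℝ) ≤ 1/2 by norm_num) (show (0:ℝ) ≤ 1/2 by norm_num)
    (show (1:ℝ)/2 + 1/2 = 1 by norm_num)
  simp only [smul_eq_mul] at hhalf
  have hstep1 : A ^ (2/p) + B ^ (2/p) ≤ 2 * ((A + B) / 2) ^ (2/p) := by
    have he : (1:ℝ)/2 * A + 1/2 * B = (A + B) / 2 := by ring
    rw [he] at hhalf
    linarith
  have hstep2 : ((A + B) / 2) ^ (2/p)
      ≤ (∑ k, (‖x k‖ ^ 2 + (p - 1) * ‖y k‖ ^ 2) ^ (p / 2)) ^ (2/p) :=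
    Real.rpow_le_rpow (by linarith) (by linarith) (by positivity)
  -- Minkowski in ℓ_{p/2}
  have hmink := Real.Lp_add_le Finset.univ (fun k : Fin d => ‖x k‖ ^ 2)
    (fun k : Fin d => (p - 1) * ‖y k‖ ^ 2) hq
  have h2p : 1 / (p / 2) = 2 / p := one_div_div p 2
  rw [h2p] at hmink
  have habs1 : ∀ k : Fin d, |‖x k‖ ^ 2 + (p - 1) * ‖y k‖ ^ 2|
      = ‖x k‖ ^ 2 + (p - 1) * ‖y k‖ ^ 2 := fun k => abs_of_nonneg (hS0 k)
  have habs2 : ∀ k : Fin d, |‖x k‖ ^ 2| = ‖x k‖ ^ 2 := fun k => abs_of_nonneg (sq_nonneg _)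
  have habs3 : ∀ k : Fin d, |(p - 1) * ‖y k‖ ^ 2| = (p - 1) * ‖y k‖ ^ 2 :=
    fun k => abs_of_nonneg (mul_nonneg (by linarith) (sq_nonneg _))
  simp only [habs1, habs2, habs3] at hmink
  have ex : (∑ k : Fin d, (‖x k‖ ^ 2) ^ (p/2)) = ∑ k, ‖x k‖ ^ p :=
    Finset.sum_congr rfl fun k _ => sq_rpow _ (norm_nonneg _)
  have ey : (∑ k : Fin d, ((p - 1) * ‖y k‖ ^ 2) ^ (p/2))
      = (p - 1) ^ (p/2) * ∑ k, ‖y k‖ ^ p := by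
    rw [Finset.mul_sum]
    refine Finset.sum_congr rfl fun k _ => ?_
    rw [Real.mul_rpow (by linarith) (sq_nonneg _), sq_rpow _ (norm_nonneg _)]
  rw [ex, ey] at hmink
  have hy0 : (0:ℝ) ≤ ∑ k, ‖y k‖ ^ p :=
    Finset.sum_nonneg fun k _ => Real.rpow_nonneg (norm_nonneg _) _
  have epq : ((p - 1) ^ (p/2) * ∑ k, ‖y k‖ ^ p) ^ (2/p)
      = (p - 1) * (∑ k, ‖y k‖ ^ p) ^ (2/p) := by
    rw [Real.mul_rpow (Real.rpow_nonneg (by linarith) _) hy0]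
    congr 1
    rw [← Real.rpow_mul (by linarith : (0:ℝ) ≤ p - 1)]
    have : p / 2 * (2 / p) = 1 := by field_simp
    rw [this, Real.rpow_one]
  rw [epq] at hmink
  linarith
end

section
/- Let E₀ be a finite-dimensional normed space over 𝕂. The following are equivalent: (i) E₀ has no one-dimensional 2-summand, i.e., there is no linear projection P : E₀ → E₀ with one-dimensional range satisfying ‖x‖² = ‖P x‖² + ‖x − P x‖² for all x ∈ E₀; (ii) for every Hilbert space H over 𝕂, every linear isometric embedding T : E₀ → E₀ ⊕₂ H satisfies T(E₀) = E₀ × {0}. -/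
open Filter Topology

section aux
variable {𝕜 : Type*} [RCLike 𝕜] {E₀ : Type*} [NormedAddCommGroup E₀] [NormedSpace 𝕜 E₀]
  [FiniteDimensional 𝕜 E₀] {H : Type*} [NormedAddCommGroup H] [InnerProductSpace 𝕜 H]

set_option maxHeartbeats 2000000 in
theorem stmt16_aux (A : E₀ →ₗ[𝕜] E₀) (B : E₀ →ₗ[𝕜] H)
    (key : ∀ x, ‖x‖ ^ 2 = ‖A x‖ ^ 2 + ‖B x‖ ^ 2)
    (hP : ¬ ∃ P : E₀ →ₗ[𝕜] E₀, P ∘ₗ P = P ∧ Module.finrank 𝕜 (LinearMap.range P) = 1 ∧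
        ∀ x : E₀, ‖x‖ ^ 2 = ‖P x‖ ^ 2 + ‖x - P x‖ ^ 2) :
    ∀ x, B x = 0 := by
  by_contra hB
  push_neg at hB
  obtain ⟨x₀, hx₀⟩ := hB
  -- basic norm facts
  have hA1 : ∀ x, ‖A x‖ ≤ ‖x‖ := by
    intro x
    have h := key x
    nlinarith [norm_nonneg (A x), norm_nonneg x, sq_nonneg (‖B x‖), norm_nonneg (B x)]
  -- the iterates step identity
  have step : ∀ (n : ℕ) (x : E₀), ‖(A ^ n) x‖ ^ 2 = ‖(A ^ (n+1)) x‖ ^ 2 + ‖B ((A ^ n) x)‖ ^ 2 := by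
    intro n x
    have h := key ((A ^ n) x)
    have h2 : (A ^ (n+1)) x = A ((A ^ n) x) := by
      rw [pow_succ', Module.End.mul_apply]
    rw [h2]
    exact h
  have anti : ∀ (x : E₀), Antitone fun n => ‖(A ^ n) x‖ ^ 2 := by
    intro x
    refine antitone_nat_of_succ_le fun n => ?_
    have := step n x
    nlinarith [sq_nonneg ‖B ((A ^ n) x)‖]
  -- convergent subsequence of powers
  obtain ⟨Q, φ, hφ, hconv⟩ : ∃ Q : E₀ →L[𝕜] E₀, ∃ φ : ℕ → ℕ, StrictMono φ ∧
      ∀ x, Tendsto (fun j => (A ^ (φ j)) x) atTop (𝓝 (Q x)) := by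
    haveI : ProperSpace (E₀ →L[𝕜] E₀) := FiniteDimensional.proper 𝕜 _
    let Ac : E₀ →L[𝕜] E₀ := LinearMap.toContinuousLinearMap A
    have hpow : ∀ n (x : E₀), (Ac ^ n) x = (A ^ n) x := by
      intro n
      induction n with
      | zero => intro x; rfl
      | succ n ih =>
          intro x; rw [pow_succ, pow_succ]
          simp only [ContinuousLinearMap.mul_apply, Module.End.mul_apply]
          rw [ih]; rfl
    have hAn : ∀ n (x : E₀), ‖(A ^ n) x‖ ≤ ‖x‖ := by
      intro n
      induction n with
      | zero => intro x; simp
      | succ n ih =>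
          intro x; rw [pow_succ]
          simpa using le_trans (ih (A x)) (hA1 x)
    have hball : ∀ n, (Ac ^ n) ∈ Metric.closedBall (0 : E₀ →L[𝕜] E₀) 1 := by
      intro n
      rw [Metric.mem_closedBall, dist_zero_right]
      refine ContinuousLinearMap.opNorm_le_bound _ zero_le_one fun x => ?_
      rw [hpow, one_mul]; exact hAn n x
    obtain ⟨Q, -, φ, hφ, hconv⟩ := tendsto_subseq_of_bounded Metric.isBounded_closedBall hball
    refine ⟨Q, φ, hφ, fun x => ?_⟩
    have h2 := ((ContinuousLinearMap.apply 𝕜 E₀ x).continuous.tendsto Q).comp hconv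
    refine h2.congr fun j => ?_
    simp [Function.comp, hpow]
  have hnormconv : ∀ x, Tendsto (fun j => ‖(A ^ (φ j)) x‖) atTop (𝓝 ‖Q x‖) :=
    fun x => (continuous_norm.tendsto _).comp (hconv x)
  -- B (A^m x) → 0
  have hBA0 : ∀ x, Tendsto (fun m => B ((A ^ m) x)) atTop (𝓝 0) := by
    intro x
    have hbdd : BddBelow (Set.range fun n => ‖(A ^ n) x‖ ^ 2) := by
      refine ⟨0, fun y hy => ?_⟩
      obtain ⟨n, rfl⟩ := hy
      positivity
    have hlim := tendsto_atTop_ciInf (anti x) hbdd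
    have hd : Tendsto (fun m => ‖(A ^ m) x‖ ^ 2 - ‖(A ^ (m+1)) x‖ ^ 2) atTop (𝓝 0) := by
      have := hlim.sub (hlim.comp (tendsto_add_atTop_nat 1))
      simpa using this
    have hd' : Tendsto (fun m => ‖B ((A ^ m) x)‖ ^ 2) atTop (𝓝 0) := by
      refine hd.congr fun m => ?_
      have := step m x
      linarith
    have hn : Tendsto (fun m => ‖B ((A ^ m) x)‖) atTop (𝓝 0) := by
      have h := (hd'.sqrt)
      rw [Real.sqrt_zero] at h
      refine h.congr fun m => ?_
      rw [Real.sqrt_sq (norm_nonneg _)]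
    exact tendsto_zero_iff_norm_tendsto_zero.2 hn
  -- the subspace V
  set V : Submodule 𝕜 E₀ := ⨅ n : ℕ, LinearMap.ker (B ∘ₗ (A ^ n)) with hV
  have memV : ∀ v, v ∈ V ↔ ∀ n : ℕ, B ((A ^ n) v) = 0 := by
    intro v
    simp [hV, Submodule.mem_iInf, LinearMap.mem_ker]
  -- range Q ⊆ V
  have hQmem : ∀ x, Q x ∈ V := by
    intro x
    rw [memV]
    intro k
    have cont : Continuous (B ∘ₗ (A ^ k) : E₀ →ₗ[𝕜] H) := LinearMap.continuous_of_finiteDimensional _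
    have h1 : Tendsto (fun j => B ((A ^ k) ((A ^ (φ j)) x))) atTop (𝓝 (B ((A ^ k) (Q x)))) :=
      (cont.tendsto _).comp (hconv x)
    have h2 : Tendsto (fun j => B ((A ^ k) ((A ^ (φ j)) x))) atTop (𝓝 0) := by
      have hcomp := (hBA0 x).comp (tendsto_atTop_mono (fun j => le_add_of_nonneg_left (Nat.zero_le k) : ∀ j, φ j ≤ k + φ j) hφ.tendsto_atTop)
      refine hcomp.congr fun j => ?_
      simp only [Function.comp]
      rw [pow_add, Module.End.mul_apply]
    exact tendsto_nhds_unique h1 h2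
  -- norms on V are preserved
  have hAnV : ∀ v ∈ V, ∀ n : ℕ, ‖(A ^ n) v‖ = ‖v‖ := by
    intro v hv
    intro n
    induction n with
    | zero => simp
    | succ n ih =>
        have hs := step n v
        rw [(memV v).1 hv n] at hs
        simp at hs
        have h1 : ‖(A ^ (n+1)) v‖ ^ 2 = ‖v‖ ^ 2 := by rw [← hs, ih]
        nlinarith [norm_nonneg ((A ^ (n+1)) v), norm_nonneg v]
  have hQnorm : ∀ v ∈ V, ‖Q v‖ = ‖v‖ := by
    intro v hv
    have h1 := hnormconv v
    have h2 : Tendsto (fun j : ℕ => ‖(A ^ (φ j)) v‖) atTop (𝓝 ‖v‖) := by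
      refine tendsto_const_nhds.congr fun j => (hAnV v hv (φ j)).symm
    exact tendsto_nhds_unique h1 h2
  -- construct the 2-projection E onto V
  let Q₀ : E₀ →ₗ[𝕜] V := LinearMap.codRestrict V (Q : E₀ →ₗ[𝕜] E₀) hQmem
  let Qᵥ : V →ₗ[𝕜] V := Q₀ ∘ₗ V.subtype
  have hQᵥapp : ∀ w : V, ((Qᵥ w : V) : E₀) = Q (w : E₀) := fun w => rfl
  have hQᵥinj : Function.Injective Qᵥ := by
    refine LinearMap.ker_eq_bot.1 ((Submodule.eq_bot_iff _).2 fun v hv => ?_)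
    have h0 : Q (v : E₀) = 0 := by
      have := congrArg (Subtype.val) (LinearMap.mem_ker.1 hv)
      simpa [hQᵥapp] using this
    have hn : ‖(v : E₀)‖ = 0 := by rw [← hQnorm _ v.2, h0, norm_zero]
    exact Subtype.ext (norm_eq_zero.mp hn)
  have hQᵥsurj : Function.Surjective Qᵥ := LinearMap.injective_iff_surjective.mp hQᵥinj
  let eqv : V ≃ₗ[𝕜] V := LinearEquiv.ofBijective Qᵥ ⟨hQᵥinj, hQᵥsurj⟩
  have heqv : ∀ w : V, eqv w = Qᵥ w := fun w => rfl
  set E : E₀ →ₗ[𝕜] E₀ := V.subtype ∘ₗ (eqv.symm : V →ₗ[𝕜] V) ∘ₗ Q₀ with hE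
  have hEapp : ∀ x, E x = ((eqv.symm (Q₀ x) : V) : E₀) := fun x => rfl
  have hEmem : ∀ x, E x ∈ V := fun x => by rw [hEapp]; exact SetLike.coe_mem _
  have hEV : ∀ v : V, E (v : E₀) = (v : E₀) := by
    intro v
    rw [hEapp]
    have h1 : Q₀ (v : E₀) = eqv v := rfl
    rw [h1, LinearEquiv.symm_apply_apply]
  have hQE : ∀ x, Q (E x) = Q x := by
    intro x
    rw [hEapp]
    have h1 : Q ((eqv.symm (Q₀ x) : V) : E₀) = ((Qᵥ (eqv.symm (Q₀ x)) : V) : E₀) := rfl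
    rw [h1, ← heqv, LinearEquiv.apply_symm_apply]
    rfl
  have hEnorm : ∀ x, ‖E x‖ = ‖Q x‖ := by
    intro x
    rw [hEapp]
    have h1 := hQnorm _ (eqv.symm (Q₀ x)).2
    rw [← h1]
    have h2 : Q ((eqv.symm (Q₀ x) : V) : E₀) = Q x := by
      have := hQE x
      rwa [hEapp] at this
    rw [h2]
  have hidem : ∀ x, E (E x) = E x := by
    intro x
    have := hEV ⟨E x, hEmem x⟩
    simpa using this
  -- E is a 2-projection
  have h2prop : ∀ x, ‖x‖ ^ 2 = ‖E x‖ ^ 2 + ‖x - E x‖ ^ 2 := by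
    intro x
    have gdiff : ∀ n : ℕ, ‖x‖ ^ 2 - ‖(A ^ n) x‖ ^ 2
        = ‖x - E x‖ ^ 2 - ‖(A ^ n) (x - E x)‖ ^ 2 := by
      intro n
      induction n with
      | zero => simp
      | succ n ih =>
          have s1 := step n x
          have s2 := step n (x - E x)
          have hBE : B ((A ^ n) (E x)) = 0 := (memV _).1 (hEmem x) n
          have hBeq : B ((A ^ n) (x - E x)) = B ((A ^ n) x) := by
            rw [map_sub, map_sub, hBE, sub_zero]
          rw [hBeq] at s2
          linarith
    have l1 : Tendsto (fun j => ‖x‖ ^ 2 - ‖(A ^ (φ j)) x‖ ^ 2) atTop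
        (𝓝 (‖x‖ ^ 2 - ‖Q x‖ ^ 2)) := tendsto_const_nhds.sub ((hnormconv x).pow 2)
    have l2 : Tendsto (fun j => ‖x - E x‖ ^ 2 - ‖(A ^ (φ j)) (x - E x)‖ ^ 2) atTop
        (𝓝 (‖x - E x‖ ^ 2 - ‖Q (x - E x)‖ ^ 2)) :=
      tendsto_const_nhds.sub ((hnormconv (x - E x)).pow 2)
    have hQx : Q (x - E x) = 0 := by rw [map_sub, hQE, sub_self]
    rw [hQx, norm_zero] at l2
    have heq := tendsto_nhds_unique (l1.congr fun j => gdiff (φ j)) l2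
    have hE2 : ‖E x‖ ^ 2 = ‖Q x‖ ^ 2 := by rw [hEnorm]
    norm_num at heq
    linarith [heq, hE2]
  have hkerQ : ∀ x, E x = 0 → Q x = 0 := fun x hx => by rw [← hQE x, hx, map_zero]
  -- the kernel of E satisfies the parallelogram law
  set N : Submodule 𝕜 E₀ := LinearMap.ker E with hN
  have main : ∀ a b : E₀, Q a = 0 → Q b = 0 →
      ‖a + b‖ ^ 2 + ‖a - b‖ ^ 2 = 2 * ‖a‖ ^ 2 + 2 * ‖b‖ ^ 2 := by
    intro a b ha hb
    have Dn : ∀ n : ℕ, ‖a + b‖ ^ 2 + ‖a - b‖ ^ 2 - 2 * ‖a‖ ^ 2 - 2 * ‖b‖ ^ 2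
        = ‖(A ^ n) (a + b)‖ ^ 2 + ‖(A ^ n) (a - b)‖ ^ 2
          - 2 * ‖(A ^ n) a‖ ^ 2 - 2 * ‖(A ^ n) b‖ ^ 2 := by
      intro n
      induction n with
      | zero => simp
      | succ n ih =>
          have s1 := step n (a + b)
          have s2 := step n (a - b)
          have s3 := step n a
          have s4 := step n b
          have hpl := parallelogram_law_with_norm 𝕜 (B ((A ^ n) a)) (B ((A ^ n) b))
          have e1 : B ((A ^ n) (a + b)) = B ((A ^ n) a) + B ((A ^ n) b) := by
            rw [map_add, map_add]
          have e2 : B ((A ^ n) (a - b)) = B ((A ^ n) a) - B ((A ^ n) b) := by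
            rw [map_sub, map_sub]
          rw [e1] at s1
          rw [e2] at s2
          linarith [hpl, s1, s2, s3, s4, ih]
    have lim0 : ∀ c : E₀, Q c = 0 → Tendsto (fun j => ‖(A ^ (φ j)) c‖) atTop (𝓝 0) := by
      intro c hc
      have := hnormconv c
      rwa [hc, norm_zero] at this
    have hab : Q (a + b) = 0 := by rw [map_add, ha, hb, add_zero]
    have hab' : Q (a - b) = 0 := by rw [map_sub, ha, hb, sub_zero]
    have lrhs : Tendsto (fun j => ‖(A ^ (φ j)) (a + b)‖ ^ 2 + ‖(A ^ (φ j)) (a - b)‖ ^ 2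
        - 2 * ‖(A ^ (φ j)) a‖ ^ 2 - 2 * ‖(A ^ (φ j)) b‖ ^ 2) atTop (𝓝 0) := by
      have h1 := ((lim0 _ hab).pow 2)
      have h2 := ((lim0 _ hab').pow 2)
      have h3 := ((lim0 _ ha).pow 2)
      have h4 := ((lim0 _ hb).pow 2)
      have comb := ((h1.add h2).sub (h3.const_mul 2)).sub (h4.const_mul 2)
      have comb2 : Tendsto (fun j => ‖(A ^ (φ j)) (a + b)‖ ^ 2 + ‖(A ^ (φ j)) (a - b)‖ ^ 2
          - 2 * ‖(A ^ (φ j)) a‖ ^ 2 - 2 * ‖(A ^ (φ j)) b‖ ^ 2) atTop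
          (𝓝 (0 ^ 2 + 0 ^ 2 - 2 * 0 ^ 2 - 2 * 0 ^ 2)) := comb
      rw [show (0:ℝ) ^ 2 + 0 ^ 2 - 2 * 0 ^ 2 - 2 * 0 ^ 2 = 0 by norm_num] at comb2
      exact comb2
    have lconst : Tendsto (fun _ : ℕ => ‖a + b‖ ^ 2 + ‖a - b‖ ^ 2 - 2 * ‖a‖ ^ 2 - 2 * ‖b‖ ^ 2)
        atTop (𝓝 (‖a + b‖ ^ 2 + ‖a - b‖ ^ 2 - 2 * ‖a‖ ^ 2 - 2 * ‖b‖ ^ 2)) := tendsto_const_nhds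
    have := tendsto_nhds_unique (lconst.congr fun j => Dn (φ j)) lrhs
    linarith
  have hpar : ∀ u v : N, ‖u + v‖ * ‖u + v‖ + ‖u - v‖ * ‖u - v‖
      = 2 * (‖u‖ * ‖u‖ + ‖v‖ * ‖v‖) := by
    intro u v
    have hu : Q (u : E₀) = 0 := hkerQ _ (LinearMap.mem_ker.1 u.2)
    have hv : Q (v : E₀) = 0 := hkerQ _ (LinearMap.mem_ker.1 v.2)
    have := main (u : E₀) (v : E₀) hu hv
    have cn : ∀ w : N, ‖w‖ = ‖(w : E₀)‖ := fun w => rfl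
    rw [cn, cn, cn, cn]
    push_cast
    simp only [show ∀ r : ℝ, r * r = r ^ 2 from fun r => (sq r).symm]
    linarith [this]
  letI ips : InnerProductSpace 𝕜 N := InnerProductSpace.ofNorm (𝕜 := 𝕜) hpar
  -- a unit vector in N
  have hn₀mem : x₀ - E x₀ ∈ N := by
    rw [hN, LinearMap.mem_ker, map_sub, hidem, sub_self]
  have hn₀ne' : x₀ - E x₀ ≠ 0 := by
    intro h
    have hx₀mem : x₀ ∈ V := by
      have hh : x₀ = E x₀ := by rwa [sub_eq_zero] at h
      rw [hh]; exact hEmem x₀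
    have h0 := (memV x₀).1 hx₀mem 0
    simp only [pow_zero, Module.End.one_apply] at h0
    exact hx₀ h0
  set n₀ : N := ⟨x₀ - E x₀, hn₀mem⟩ with hn₀
  have hn₀ne : n₀ ≠ 0 := fun h => hn₀ne' (congrArg Subtype.val h)
  have hne : ‖n₀‖ ≠ 0 := norm_ne_zero_iff.2 hn₀ne
  set e : N := ((‖n₀‖⁻¹ : ℝ) : 𝕜) • n₀ with he
  have hee : ‖e‖ = 1 := by
    rw [he, norm_smul, RCLike.norm_ofReal, abs_inv, abs_norm]
    exact inv_mul_cancel₀ hne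
  have hip : (inner 𝕜 e e : 𝕜) = 1 := by
    rw [inner_self_eq_norm_sq_to_K, hee]
    norm_num
  have heE0 : (e : E₀) ≠ 0 := by
    intro h
    rw [show (0 : E₀) = ((0 : N) : E₀) from rfl] at h
    have := Subtype.ext (h : (e : E₀) = ((0:N) : E₀))
    rw [this, norm_zero] at hee
    norm_num at hee
  have hEN : ∀ y : N, E (y : E₀) = 0 := fun y => LinearMap.mem_ker.1 y.2
  -- the rank-one projection
  have hπmem : ∀ x : E₀, x - E x ∈ N := by
    intro x
    rw [hN, LinearMap.mem_ker, map_sub, hidem, sub_self]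
  let π : E₀ →ₗ[𝕜] N := LinearMap.codRestrict N (LinearMap.id - E) fun x => hπmem x
  have hπcoe : ∀ x, ((π x : N) : E₀) = x - E x := fun x => rfl
  let P₁ : N →ₗ[𝕜] N := LinearMap.toSpanSingleton 𝕜 N e ∘ₗ (innerSL 𝕜 e : N →ₗ[𝕜] 𝕜)
  have hP₁app : ∀ y : N, P₁ y = (inner 𝕜 e y : 𝕜) • e := fun y => rfl
  let P : E₀ →ₗ[𝕜] E₀ := N.subtype ∘ₗ P₁ ∘ₗ π
  have hPapp : ∀ x, P x = ((P₁ (π x) : N) : E₀) := fun x => rfl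
  have hP₁idem : ∀ y : N, P₁ (P₁ y) = P₁ y := by
    intro y
    rw [hP₁app, hP₁app, inner_smul_right, hip, mul_one]
  -- idempotence
  have hPP : P ∘ₗ P = P := by
    apply LinearMap.ext
    intro x
    show P (P x) = P x
    have h1 : π (P x) = P₁ (π x) := by
      apply Subtype.ext
      rw [hπcoe, hPapp]
      rw [hEN (P₁ (π x)), sub_zero]
    rw [hPapp, h1, hP₁idem, ← hPapp]
  -- rank one
  have hPe : P ((e : N) : E₀) = (e : E₀) := by
    have h1 : π ((e : N) : E₀) = e := by
      apply Subtype.ext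
      rw [hπcoe, hEN e, sub_zero]
    rw [hPapp, h1, hP₁app, hip, one_smul]
  have hrange : LinearMap.range P = Submodule.span 𝕜 {((e : N) : E₀)} := by
    apply le_antisymm
    · rintro y ⟨x, rfl⟩
      rw [hPapp, hP₁app]
      rw [Submodule.coe_smul]
      exact Submodule.smul_mem _ _ (Submodule.mem_span_singleton_self _)
    · rw [Submodule.span_le, Set.singleton_subset_iff]
      exact ⟨((e : N) : E₀), hPe⟩
  have hrank1 : Module.finrank 𝕜 (LinearMap.range P) = 1 := by
    rw [hrange]
    exact finrank_span_singleton heE0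
  -- the 2-projection property
  have hpyth : ∀ y : N, ‖y‖ ^ 2 = ‖P₁ y‖ ^ 2 + ‖y - P₁ y‖ ^ 2 := by
    intro y
    have horth : (inner 𝕜 (P₁ y) (y - P₁ y) : 𝕜) = 0 := by
      rw [hP₁app, inner_smul_left, inner_sub_right, inner_smul_right, hip, mul_one, sub_self,
        mul_zero]
    have hns := norm_add_sq (𝕜 := 𝕜) (P₁ y) (y - P₁ y)
    rw [horth, map_zero] at hns
    rw [add_sub_cancel] at hns
    linarith [hns]
  have hmix : ∀ x : E₀, ∀ m : N, ‖E x + (m : E₀)‖ ^ 2 = ‖E x‖ ^ 2 + ‖(m : E₀)‖ ^ 2 := by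
    intro x m
    have h := h2prop (E x + (m : E₀))
    have hE' : E (E x + (m : E₀)) = E x := by rw [map_add, hidem, hEN m, add_zero]
    rw [hE'] at h
    simpa using h
  have hnormid : ∀ x : E₀, ‖x‖ ^ 2 = ‖P x‖ ^ 2 + ‖x - P x‖ ^ 2 := by
    intro x
    have hxE := h2prop x
    have hxP : x - P x = E x + ((π x - P₁ (π x) : N) : E₀) := by
      rw [Submodule.coe_sub, hπcoe, hPapp]
      abel
    have cn : ∀ w : N, ‖w‖ = ‖(w : E₀)‖ := fun w => rfl
    have hp := hpyth (π x)
    rw [cn, cn, hπcoe] at hp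
    rw [hxP, hmix x (π x - P₁ (π x)), hPapp]
    rw [Submodule.coe_sub, hπcoe]
    rw [cn, Submodule.coe_sub, hπcoe] at hp
    linarith [hxE, hp]
  exact hP ⟨P, hPP, hrank1, hnormid⟩

end aux

theorem stmt16_easy.{u, v, w} (𝕜 : Type u) [RCLike 𝕜] (E₀ : Type v) [NormedAddCommGroup E₀]
    [NormedSpace 𝕜 E₀] [FiniteDimensional 𝕜 E₀]
    (h : ∀ (H : Type w) (_ : NormedAddCommGroup H) (_ : InnerProductSpace 𝕜 H)
        (_ : CompleteSpace H) (T : E₀ →ₗᵢ[𝕜] WithLp 2 (E₀ × H)),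
        (∀ z : E₀, ∃ w : E₀, T z = (WithLp.equiv 2 (E₀ × H)).symm (w, 0)) ∧
        (∀ w : E₀, ∃ z : E₀, T z = (WithLp.equiv 2 (E₀ × H)).symm (w, 0))) :
    ¬ ∃ P : E₀ →ₗ[𝕜] E₀, P ∘ₗ P = P ∧ Module.finrank 𝕜 (LinearMap.range P) = 1 ∧
        ∀ x : E₀, ‖x‖ ^ 2 = ‖P x‖ ^ 2 + ‖x - P x‖ ^ 2 := by
  rintro ⟨P, hidem, hrank, hnorm⟩
  -- a model of 𝕜 as a Hilbert space in universe w
  haveI hsmall : Small.{w} 𝕜 :=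
    small_map ((Module.finBasis ℝ 𝕜).equivFun.symm.toEquiv.symm : 𝕜 ≃ (Fin (Module.finrank ℝ 𝕜) → ℝ))
  let H : Type w := Shrink.{w} 𝕜
  let ψ : H ≃ₗ[𝕜] 𝕜 := Shrink.linearEquiv 𝕜 𝕜
  letI : NormedAddCommGroup H :=
    inferInstance
  have hψn : ∀ a : H, ‖a‖ = ‖ψ a‖ := fun a => rfl
  letI : NormedSpace 𝕜 H :=
    { norm_smul_le := fun c a => by
        rw [hψn, hψn, map_smul, norm_smul] }
  letI : Inner 𝕜 H := ⟨fun a b => inner (𝕜 := 𝕜) (ψ a) (ψ b)⟩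
  have hinner : ∀ a b : H, (inner 𝕜 a b : 𝕜) = inner 𝕜 (ψ a) (ψ b) := fun _ _ => rfl
  letI : InnerProductSpace 𝕜 H :=
    { inner := fun a b => inner (𝕜 := 𝕜) (ψ a) (ψ b)
      norm_sq_eq_re_inner := fun a => by
        rw [hψn]
        exact InnerProductSpace.norm_sq_eq_re_inner (𝕜 := 𝕜) (ψ a)
      conj_inner_symm := fun a b => inner_conj_symm (ψ a) (ψ b)
      add_left := fun a b c => by
        show (inner (𝕜 := 𝕜) (ψ (a + b)) (ψ c) : 𝕜)
          = (inner (𝕜 := 𝕜) (ψ a) (ψ c) : 𝕜) + (inner (𝕜 := 𝕜) (ψ b) (ψ c) : 𝕜)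
        rw [map_add, inner_add_left]
      smul_left := fun a b r => by
        show (inner (𝕜 := 𝕜) (ψ (r • a)) (ψ b) : 𝕜)
          = (starRingEnd 𝕜) r * (inner (𝕜 := 𝕜) (ψ a) (ψ b) : 𝕜)
        rw [map_smul, inner_smul_left] }
  haveI : CompleteSpace H := by
    have hiso : Isometry ψ := AddMonoidHomClass.isometry_of_norm ψ.toLinearMap fun a => (hψn a).symm
    exact (IsometryEquiv.mk ψ.toEquiv hiso).completeSpace
  -- unit vector spanning the range of P
  have hbot : LinearMap.range P ≠ ⊥ := by
    intro hb
    rw [hb] at hrank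
    simp at hrank
  obtain ⟨v₀, hv₀mem, hv₀ne⟩ := Submodule.exists_mem_ne_zero_of_ne_bot hbot
  set e : E₀ := ((‖v₀‖⁻¹ : ℝ) : 𝕜) • v₀ with he
  have hv₀n : ‖v₀‖ ≠ 0 := norm_ne_zero_iff.2 hv₀ne
  have hee : ‖e‖ = 1 := by
    rw [he, norm_smul, RCLike.norm_ofReal, abs_inv, abs_norm]
    exact inv_mul_cancel₀ hv₀n
  have he0 : e ≠ 0 := by
    intro h0
    rw [h0, norm_zero] at hee
    norm_num at hee
  have hemem : e ∈ LinearMap.range P := Submodule.smul_mem _ _ hv₀mem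
  have hspan : LinearMap.range P = Submodule.span 𝕜 {e} := by
    refine (Submodule.eq_of_le_of_finrank_eq ?_ ?_).symm
    · rw [Submodule.span_le, Set.singleton_subset_iff]; exact hemem
    · rw [finrank_span_singleton he0, hrank]
  have hPP : ∀ u, P (P u) = P u := fun u => LinearMap.ext_iff.1 hidem u
  have hPe : P e = e := by
    obtain ⟨u, hu⟩ := hemem
    rw [← hu, hPP]
  -- coordinate functional
  let eqv := LinearEquiv.toSpanNonzeroSingleton 𝕜 E₀ e he0
  let g : E₀ →ₗ[𝕜] Submodule.span 𝕜 {e} :=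
    LinearMap.codRestrict _ P (fun x => hspan ▸ LinearMap.mem_range_self P x)
  let f : E₀ →ₗ[𝕜] 𝕜 := (eqv.symm : Submodule.span 𝕜 {e} →ₗ[𝕜] 𝕜) ∘ₗ g
  have hfP : ∀ x, f x • e = P x := by
    intro x
    have h1 : eqv (f x) = g x := eqv.apply_symm_apply (g x)
    have h2 : ((eqv (f x) : Submodule.span 𝕜 {e}) : E₀) = f x • e :=
      congrArg Subtype.val (LinearEquiv.toSpanNonzeroSingleton_apply 𝕜 E₀ e he0 (f x))
    rw [← h2, h1]
    rfl
  have hfnorm : ∀ x, ‖f x‖ = ‖P x‖ := by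
    intro x
    rw [← hfP, norm_smul, hee, mul_one]
  have hfe : f e = 1 := by
    have h1 : f e • e = (1 : 𝕜) • e := by rw [hfP, hPe, one_smul]
    exact smul_left_injective 𝕜 he0 h1
  -- the isometric embedding
  let L : E₀ →ₗ[𝕜] WithLp 2 (E₀ × H) :=
    (WithLp.linearEquiv 2 𝕜 (E₀ × H)).symm.toLinearMap ∘ₗ
      ((LinearMap.id - P).prod ((ψ.symm : 𝕜 →ₗ[𝕜] H) ∘ₗ f))
  have hLapp : ∀ x, L x = (WithLp.equiv 2 (E₀ × H)).symm (x - P x, ψ.symm (f x)) := fun x => rfl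
  have hLnorm : ∀ x, ‖L x‖ = ‖x‖ := by
    intro x
    have h1 : ‖L x‖ ^ 2 = ‖x - P x‖ ^ 2 + ‖ψ.symm (f x)‖ ^ 2 := by
      rw [hLapp]
      have := WithLp.prod_norm_sq_eq_of_L2 ((WithLp.equiv 2 (E₀ × H)).symm (x - P x, ψ.symm (f x)))
      simpa using this
    rw [hψn, ψ.apply_symm_apply, hfnorm] at h1
    have h2 : ‖L x‖ ^ 2 = ‖x‖ ^ 2 := by rw [h1, hnorm x]; ring
    nlinarith [norm_nonneg (L x), norm_nonneg x]
  let T : E₀ →ₗᵢ[𝕜] WithLp 2 (E₀ × H) := ⟨L, hLnorm⟩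
  obtain ⟨h1, -⟩ := h H inferInstance inferInstance inferInstance T
  obtain ⟨w, hw⟩ := h1 e
  have hTe : T e = (WithLp.equiv 2 (E₀ × H)).symm (0, ψ.symm 1) := by
    show L e = _
    rw [hLapp, hPe, sub_self, hfe]
  rw [hTe] at hw
  have hpair := (WithLp.equiv 2 (E₀ × H)).symm.injective hw
  have h2 : ψ.symm 1 = 0 := congrArg Prod.snd hpair
  have h3 : (1 : 𝕜) = 0 := by
    have := congrArg ψ h2
    rwa [ψ.apply_symm_apply, map_zero] at this
  exact one_ne_zero h3

/-- For a finite-dimensional normed space `E₀` over `𝕂 = ℝ` or `ℂ`, the following are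
equivalent:
(i) `E₀` has no one-dimensional 2-summand, i.e. there is no idempotent linear map
`P : E₀ → E₀` with one-dimensional range such that `‖x‖² = ‖P x‖² + ‖x - P x‖²` for all `x`;
(ii) for every Hilbert space `H` over `𝕂`, every linear isometric embedding
`T : E₀ → E₀ ⊕₂ H` (the 2-direct sum being `WithLp 2 (E₀ × H)`) maps `E₀` onto `E₀ × {0}`. -/
theorem stmt16 (𝕜 : Type*) [RCLike 𝕜] (E₀ : Type*) [NormedAddCommGroup E₀] [NormedSpace 𝕜 E₀]
    [FiniteDimensional 𝕜 E₀] :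
    (¬ ∃ P : E₀ →ₗ[𝕜] E₀, P ∘ₗ P = P ∧ Module.finrank 𝕜 (LinearMap.range P) = 1 ∧
        ∀ x : E₀, ‖x‖ ^ 2 = ‖P x‖ ^ 2 + ‖x - P x‖ ^ 2) ↔
      (∀ (H : Type*) (_ : NormedAddCommGroup H) (_ : InnerProductSpace 𝕜 H) (_ : CompleteSpace H)
        (T : E₀ →ₗᵢ[𝕜] WithLp 2 (E₀ × H)),
        (∀ z : E₀, ∃ w : E₀, T z = (WithLp.equiv 2 (E₀ × H)).symm (w, 0)) ∧
        (∀ w : E₀, ∃ z : E₀, T z = (WithLp.equiv 2 (E₀ × H)).symm (w, 0))) := by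
  constructor
  · intro hP H _ _ _ T
    set A : E₀ →ₗ[𝕜] E₀ := LinearMap.fst 𝕜 E₀ H ∘ₗ
      (WithLp.linearEquiv 2 𝕜 (E₀ × H)).toLinearMap ∘ₗ T.toLinearMap with hA
    set B : E₀ →ₗ[𝕜] H := LinearMap.snd 𝕜 E₀ H ∘ₗ
      (WithLp.linearEquiv 2 𝕜 (E₀ × H)).toLinearMap ∘ₗ T.toLinearMap with hB
    have hTAB : ∀ z, T z = (WithLp.equiv 2 (E₀ × H)).symm (A z, B z) := by
      intro z
      have h1 : (WithLp.equiv 2 (E₀ × H)) (T z) = (A z, B z) := rfl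
      rw [← h1, Equiv.symm_apply_apply]
    have key : ∀ x, ‖x‖ ^ 2 = ‖A x‖ ^ 2 + ‖B x‖ ^ 2 := by
      intro x
      have h := WithLp.prod_norm_sq_eq_of_L2 (T x)
      rw [T.norm_map] at h
      exact h
    have hB0 : ∀ x, B x = 0 := stmt16_aux A B key hP
    have hAiso : ∀ x, ‖A x‖ = ‖x‖ := by
      intro x
      have h := key x
      rw [hB0 x, norm_zero] at h
      nlinarith [norm_nonneg (A x), norm_nonneg x]
    have hAinj : Function.Injective A := by
      intro a b hab
      have h0 : ‖A (a - b)‖ = 0 := by rw [map_sub, hab, sub_self, norm_zero]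
      rw [hAiso] at h0
      exact sub_eq_zero.1 (norm_eq_zero.1 h0)
    have hAsurj := LinearMap.injective_iff_surjective.mp hAinj
    constructor
    · intro z
      exact ⟨A z, by rw [hTAB z, hB0 z]⟩
    · intro w
      obtain ⟨z, hz⟩ := hAsurj w
      exact ⟨z, by rw [hTAB z, hB0 z, hz]⟩
  · exact fun h => stmt16_easy 𝕜 E₀ h
end

section
/- Let E₀ be a Banach space over 𝕂 having no one-dimensional 2-summand, let H be a Hilbert space over 𝕂, and let T : E₀ → E₀ ⊕₂ H be a linear isometric embedding. Then T(E₀) ∩ ({0} × H) = {0}. -/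
open scoped InnerProductSpace

/-- If `E₀` is a Banach space over `𝕂 = ℝ` or `ℂ` with no one-dimensional 2-summand
(no idempotent linear map `P : E₀ → E₀` with one-dimensional range and
`‖x‖² = ‖P x‖² + ‖x - P x‖²` for all `x`), `H` a Hilbert space over `𝕂`, and
`T : E₀ → E₀ ⊕₂ H` a linear isometric embedding (the 2-direct sum being `WithLp 2 (E₀ × H)`),
then `T(E₀) ∩ ({0} × H) = {0}`. -/
theorem stmt17 (𝕜 : Type*) [RCLike 𝕜] (E₀ : Type*) [NormedAddCommGroup E₀] [NormedSpace 𝕜 E₀]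
    [CompleteSpace E₀]
    (hE₀ : ¬ ∃ P : E₀ →ₗ[𝕜] E₀, P ∘ₗ P = P ∧ Module.finrank 𝕜 (LinearMap.range P) = 1 ∧
      ∀ x : E₀, ‖x‖ ^ 2 = ‖P x‖ ^ 2 + ‖x - P x‖ ^ 2)
    (H : Type*) [NormedAddCommGroup H] [InnerProductSpace 𝕜 H] [CompleteSpace H]
    (T : E₀ →ₗᵢ[𝕜] WithLp 2 (E₀ × H)) :
    ∀ z : E₀, (WithLp.equiv 2 (E₀ × H) (T z)).1 = 0 → T z = 0 := by
  intro z hz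
  by_contra hTz
  apply hE₀
  have hz0 : z ≠ 0 := fun hzz => hTz (by simp [hzz])
  set h : H := (T z).ofLp.2 with hh
  have hT1 : (T z).ofLp.1 = 0 := hz
  have hnorm : ∀ x : E₀, ‖x‖ ^ 2 = ‖(T x).ofLp.1‖ ^ 2 + ‖(T x).ofLp.2‖ ^ 2 := fun x => by
    rw [← T.norm_map x]; exact WithLp.prod_norm_sq_eq_of_L2 (T x)
  have hzh : ‖z‖ = ‖h‖ := by
    have hn := hnorm z
    rw [hT1] at hn
    simp only [norm_zero] at hn
    nlinarith [norm_nonneg z, norm_nonneg h]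
  have hh0 : h ≠ 0 := by
    intro e
    apply hz0
    rw [← norm_eq_zero, hzh, e, norm_zero]
  have hhK : ((‖h‖ : 𝕜)) ≠ 0 := by
    simpa using (norm_ne_zero_iff.mpr hh0)
  set c : E₀ → 𝕜 := fun x => (⟪h, (T x).ofLp.2⟫_𝕜) / (‖h‖ : 𝕜) ^ 2 with hc
  have hcmul : ∀ x : E₀, (⟪h, (T x).ofLp.2⟫_𝕜) = c x * (‖h‖ : 𝕜) ^ 2 := by
    intro x
    rw [hc]
    field_simp
  have hcz : c z = 1 := by
    rw [hc]
    simp only [← hh, inner_self_eq_norm_sq_to_K]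
    field_simp
  set P : E₀ →ₗ[𝕜] E₀ :=
    { toFun := fun x => c x • z
      map_add' := by
        intro x y
        simp only [hc, map_add]
        rw [show ((T x + T y : WithLp 2 (E₀ × H))).ofLp.2 = (T x).ofLp.2 + (T y).ofLp.2 from rfl,
          inner_add_right, add_div, add_smul]
      map_smul' := by
        intro a x
        simp only [hc, map_smul, RingHom.id_apply]
        rw [show ((a • T x : WithLp 2 (E₀ × H))).ofLp.2 = a • (T x).ofLp.2 from rfl,
          inner_smul_right, mul_div_assoc, mul_smul] } with hP
  have hPapp : ∀ x : E₀, P x = c x • z := fun _ => rfl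
  refine ⟨P, ?_, ?_, ?_⟩
  · ext x
    simp only [LinearMap.comp_apply, hPapp]
    have h2 : (T (c x • z)).ofLp.2 = c x • h := by rw [map_smul]; rfl
    have : c (c x • z) = c x := by
      show ⟪h, (T (c x • z)).ofLp.2⟫_𝕜 / (‖h‖ : 𝕜) ^ 2 = c x
      simp only [h2, inner_smul_right]
      rw [inner_self_eq_norm_sq_to_K]; field_simp
    rw [this]
  · have hrange : LinearMap.range P = Submodule.span 𝕜 {z} := by
      apply le_antisymm
      · rintro _ ⟨x, rfl⟩
        exact Submodule.smul_mem _ _ (Submodule.mem_span_singleton_self z)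
      · rw [Submodule.span_singleton_le_iff_mem]
        exact ⟨z, by rw [hPapp, hcz, one_smul]⟩
    rw [hrange]
    exact finrank_span_singleton hz0
  · intro x
    have hTsub : T (x - c x • z) = T x - c x • T z := by
      rw [map_sub, map_smul]
    have hsub1 : (T (x - c x • z)).ofLp.1 = (T x).ofLp.1 := by
      rw [hTsub]
      show (T x).ofLp.1 - c x • (T z).ofLp.1 = (T x).ofLp.1
      rw [hT1, smul_zero, sub_zero]
    have hsub2 : (T (x - c x • z)).ofLp.2 = (T x).ofLp.2 - c x • h := by
      rw [hTsub]; rfl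
    have hPnorm : ‖P x‖ = ‖c x • h‖ := by
      rw [hPapp, norm_smul, norm_smul, hzh]
    have hpyth : ‖(T x).ofLp.2‖ ^ 2 = ‖c x • h‖ ^ 2 + ‖(T x).ofLp.2 - c x • h‖ ^ 2 := by
      have hinner : ⟪c x • h, (T x).ofLp.2 - c x • h⟫_𝕜 = 0 := by
        rw [inner_sub_right, inner_smul_left, inner_smul_left, inner_smul_right,
          inner_self_eq_norm_sq_to_K, hcmul x]
        ring
      have := norm_add_sq_eq_norm_sq_add_norm_sq_of_inner_eq_zero _ _ hinner
      rw [add_sub_cancel] at this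
      simpa [pow_two] using this
    calc ‖x‖ ^ 2 = ‖(T x).ofLp.1‖ ^ 2 + ‖(T x).ofLp.2‖ ^ 2 := hnorm x
      _ = ‖c x • h‖ ^ 2 + (‖(T x).ofLp.1‖ ^ 2 + ‖(T x).ofLp.2 - c x • h‖ ^ 2) := by
          rw [hpyth]; ring
      _ = ‖P x‖ ^ 2 + ‖x - P x‖ ^ 2 := by
          rw [hPnorm, hnorm (x - P x), hPapp, hsub1, hsub2]
end

section
/- Every finite-dimensional normed space E over 𝕂 admits linear subspaces E₀ and K with E = E₀ ⊕ K (algebraic direct sum) such that: ‖x + k‖² = ‖x‖² + ‖k‖² for all x ∈ E₀ and k ∈ K (so the decomposition is a 2-direct sum); K satisfies the parallelogram law ‖a+b‖² + ‖a−b‖² = 2‖a‖² + 2‖b‖² for all a, b ∈ K; and E₀ has no one-dimensional 2-summand. -/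
/-- Every finite-dimensional normed space `E` over `𝕂 = ℝ` or `ℂ` admits a direct sum
decomposition `E = E₀ ⊕ K` into linear subspaces such that `‖x + k‖² = ‖x‖² + ‖k‖²` for
`x ∈ E₀`, `k ∈ K` (a 2-direct sum), `K` satisfies the parallelogram law (hence is hilbertian),
and `E₀` has no one-dimensional 2-summand (no idempotent linear map `P : E₀ → E₀` with
one-dimensional range and `‖x‖² = ‖P x‖² + ‖x − P x‖²` for all `x ∈ E₀`). -/
theorem stmt18 (𝕜 : Type*) [RCLike 𝕜] (E : Type*) [NormedAddCommGroup E] [NormedSpace 𝕜 E]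
    [FiniteDimensional 𝕜 E] :
    ∃ E₀ K : Submodule 𝕜 E, IsCompl E₀ K ∧
      (∀ x ∈ E₀, ∀ k ∈ K, ‖x + k‖ ^ 2 = ‖x‖ ^ 2 + ‖k‖ ^ 2) ∧
      (∀ a ∈ K, ∀ b ∈ K, ‖a + b‖ ^ 2 + ‖a - b‖ ^ 2 = 2 * ‖a‖ ^ 2 + 2 * ‖b‖ ^ 2) ∧
      ¬ ∃ P : E₀ →ₗ[𝕜] E₀, P ∘ₗ P = P ∧ Module.finrank 𝕜 (LinearMap.range P) = 1 ∧
        ∀ x : E₀, ‖x‖ ^ 2 = ‖P x‖ ^ 2 + ‖x - P x‖ ^ 2 := by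
  classical
  set p : ℕ → Prop := fun n => ∃ E₀ K : Submodule 𝕜 E,
    (IsCompl E₀ K ∧
      (∀ x ∈ E₀, ∀ k ∈ K, ‖x + k‖ ^ 2 = ‖x‖ ^ 2 + ‖k‖ ^ 2) ∧
      (∀ a ∈ K, ∀ b ∈ K, ‖a + b‖ ^ 2 + ‖a - b‖ ^ 2 = 2 * ‖a‖ ^ 2 + 2 * ‖b‖ ^ 2)) ∧
    Module.finrank 𝕜 E₀ = n with hp
  have hex : ∃ n, p n := by
    refine ⟨Module.finrank 𝕜 (⊤ : Submodule 𝕜 E), ⊤, ⊥, ⟨isCompl_top_bot, ?_, ?_⟩, rfl⟩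
    · rintro x - k hk
      rw [(Submodule.mem_bot _).mp hk]
      simp
    · rintro a ha b hb
      rw [(Submodule.mem_bot _).mp ha, (Submodule.mem_bot _).mp hb]
      simp
  obtain ⟨E₀, K, ⟨hcompl, hsum, hpar⟩, hrank⟩ := Nat.find_spec hex
  refine ⟨E₀, K, hcompl, hsum, hpar, ?_⟩
  rintro ⟨P, hP2, hPr, hPn⟩
  have hPP : ∀ y : E₀, P (P y) = P y := fun y => LinearMap.ext_iff.mp hP2 y
  set L : Submodule 𝕜 E := (LinearMap.range P).map E₀.subtype with hL
  set E₀' : Submodule 𝕜 E := (LinearMap.ker P).map E₀.subtype with hE₀'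
  set K' : Submodule 𝕜 E := L ⊔ K with hK'
  -- the 2-sum property for (E₀', K')
  have hsum' : ∀ x ∈ E₀', ∀ k ∈ K', ‖x + k‖ ^ 2 = ‖x‖ ^ 2 + ‖k‖ ^ 2 := by
    rintro _ ⟨y, hy, rfl⟩ k hk
    obtain ⟨l, hl, c, hc, rfl⟩ := Submodule.mem_sup.mp hk
    obtain ⟨w, hw, rfl⟩ := hl
    have hw' : P w = w := by
      obtain ⟨u, hu⟩ := hw
      rw [← hu, hPP]
    have hy' : P y = 0 := hy
    simp only [Submodule.coe_subtype]
    have h1 : ((y : E)) + ((w : E) + c) = ((y + w : E₀) : E) + c := by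
      push_cast; abel
    rw [h1, hsum _ (y + w).2 c hc, hsum _ w.2 c hc]
    have h2 : ‖((y + w : E₀) : E)‖ ^ 2 = ‖(w : E)‖ ^ 2 + ‖(y : E)‖ ^ 2 := by
      have h3 := hPn (y + w)
      rw [map_add, hw', hy', zero_add, add_sub_cancel_right] at h3
      exact h3
    rw [h2]; ring
  -- disjointness
  have hdisj : Disjoint E₀' K' := by
    rw [Submodule.disjoint_def]
    intro x hx hx'
    have h := hsum' x hx (-x) (neg_mem hx')
    simp only [add_neg_cancel, norm_zero, norm_neg] at h
    have hx0 : ‖x‖ = 0 := by nlinarith [norm_nonneg x]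
    simpa using hx0
  -- codisjointness
  have hcod : Codisjoint E₀' K' := by
    rw [codisjoint_iff, eq_top_iff, ← hcompl.sup_eq_top]
    apply sup_le
    · intro v hv
      have hv1 : ((⟨v, hv⟩ - P ⟨v, hv⟩ : E₀) : E) ∈ E₀' := by
        have hm : (⟨v, hv⟩ - P ⟨v, hv⟩ : E₀) ∈ LinearMap.ker P := by
          simp [LinearMap.mem_ker, map_sub, hPP]
        exact Submodule.mem_map_of_mem hm
      have hv2 : ((P ⟨v, hv⟩ : E₀) : E) ∈ K' := by
        apply Submodule.mem_sup_left
        exact ⟨P ⟨v, hv⟩, LinearMap.mem_range_self P _, rfl⟩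
      have : v = ((⟨v, hv⟩ - P ⟨v, hv⟩ : E₀) : E) + ((P ⟨v, hv⟩ : E₀) : E) := by
        simp
      rw [this]
      exact Submodule.add_mem_sup hv1 hv2
    · exact le_sup_of_le_right le_sup_right
  -- parallelogram law for K'
  obtain ⟨v, hv0, hvgen⟩ := finrank_eq_one_iff'.mp hPr
  have hpar' : ∀ a ∈ K', ∀ b ∈ K',
      ‖a + b‖ ^ 2 + ‖a - b‖ ^ 2 = 2 * ‖a‖ ^ 2 + 2 * ‖b‖ ^ 2 := by
    intro a ha b hb
    obtain ⟨l₁, hl₁, c₁, hc₁, rfl⟩ := Submodule.mem_sup.mp ha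
    obtain ⟨l₂, hl₂, c₂, hc₂, rfl⟩ := Submodule.mem_sup.mp hb
    obtain ⟨w₁, hw₁, rfl⟩ := hl₁
    obtain ⟨w₂, hw₂, rfl⟩ := hl₂
    obtain ⟨t₁, ht₁⟩ := hvgen ⟨w₁, hw₁⟩
    obtain ⟨t₂, ht₂⟩ := hvgen ⟨w₂, hw₂⟩
    have hw₁' : w₁ = t₁ • (v : E₀) := by
      have := congrArg (Subtype.val) ht₁
      simpa using this.symm
    have hw₂' : w₂ = t₂ • (v : E₀) := by
      have := congrArg (Subtype.val) ht₂
      simpa using this.symm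
    simp only [Submodule.coe_subtype]
    have e1 : (w₁ : E) + c₁ + ((w₂ : E) + c₂)
        = ((w₁ + w₂ : E₀) : E) + (c₁ + c₂) := by
      push_cast; abel
    have e2 : (w₁ : E) + c₁ - ((w₂ : E) + c₂)
        = ((w₁ - w₂ : E₀) : E) + (c₁ - c₂) := by
      push_cast; abel
    rw [e1, e2, hsum _ (w₁ + w₂).2 _ (add_mem hc₁ hc₂),
        hsum _ (w₁ - w₂).2 _ (sub_mem hc₁ hc₂),
        hsum _ w₁.2 _ hc₁, hsum _ w₂.2 _ hc₂]
    have hK := hpar c₁ hc₁ c₂ hc₂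
    have hLpar : ‖((w₁ + w₂ : E₀) : E)‖ ^ 2 + ‖((w₁ - w₂ : E₀) : E)‖ ^ 2
        = 2 * ‖(w₁ : E)‖ ^ 2 + 2 * ‖(w₂ : E)‖ ^ 2 := by
      have hVE : ∀ (t : 𝕜), ‖((t • (v : E₀) : E₀) : E)‖ = ‖t‖ * ‖((v : E₀) : E)‖ := by
        intro t
        rw [Submodule.coe_smul, norm_smul]
      have hpk : ‖t₁ + t₂‖ * ‖t₁ + t₂‖ + ‖t₁ - t₂‖ * ‖t₁ - t₂‖
          = 2 * (‖t₁‖ * ‖t₁‖ + ‖t₂‖ * ‖t₂‖) := by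
          have := parallelogram_law_with_norm 𝕜 t₁ t₂
          simp only [pow_two] at this; linarith [this]
      have hpk2 : ‖t₁ + t₂‖ ^ 2 + ‖t₁ - t₂‖ ^ 2 = 2 * ‖t₁‖ ^ 2 + 2 * ‖t₂‖ ^ 2 := by
        simp only [pow_two]; linarith [hpk]
      rw [hw₁', hw₂', ← add_smul, ← sub_smul, hVE, hVE, hVE, hVE]
      linear_combination (‖((v : E₀) : E)‖ ^ 2) * hpk2
    linarith [hK, hLpar]
  -- rank drop
  have hkerrank : Module.finrank 𝕜 E₀' = Module.finrank 𝕜 (LinearMap.ker P) :=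
    (Submodule.equivMapOfInjective E₀.subtype E₀.injective_subtype
      (LinearMap.ker P)).finrank_eq.symm
  have hrn := LinearMap.finrank_range_add_finrank_ker P
  have hlt : Module.finrank 𝕜 E₀' < Nat.find hex := by
    rw [hkerrank]; omega
  exact Nat.find_min hex hlt ⟨E₀', K', ⟨⟨hdisj, hcod⟩, hsum', hpar'⟩, rfl⟩
end
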